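/- arXiv:1805.02597 — 5 statements merged into one kernel-verified Lean document; each statement's English description precedes it below -/
import Mathlib

section
/- Let $E$, $F$ and $G$ be archimedean Riesz spaces and let $b : E \times F \to G$ be an order bounded disjointness preserving bilinear map. Then there exists a positive disjointness preserving bilinear map (an $\ell$-bimorphism) $|b| : E \times F \to G$ such that $|b(x,y)| = |b(|x|,|y|)| = |\,|b|(|x|,|y|)\,| = |b|(|x|,|y|)$ for all $x \in E$ and $y \in F$. -/
/-!
The modulus is the bilinear extension of `(u, v) ↦ |b u v|` from the positive cones, so the heart
of the matter is Meyer's lemma: an order bounded disjointness preserving additive map `T` into an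
archimedean space satisfies `|T (x + y)| = |T x| + |T y|` for `x, y ≥ 0`, which reduces to
`(T x)⁺ ⊓ (T y)⁻ = 0`. For `0 ≤ y ≤ x` slice along `z k = n • y - k • x`: the disjoint elements
`(T (z k)⁺)⁻` and `(T (z k)⁻)⁺` together cover `n • ((T x)⁺ ⊓ (T y)⁻)`, the second vanishes at
`k = 0`, the first at `k = n`, and the first drops by at most a bound `w` of `T` on `[0, x]` per
step; this forces `n • ((T x)⁺ ⊓ (T y)⁻) ≤ w` for every `n`. Comparing `x` and `y` with `x + y`
and `2x + y` removes the assumption `y ≤ x`. Finally `|B x y| ≤ B |x| |y| = |b |x| |y|| = |b x y|`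
transfers disjointness preservation from `b` to `B`.
-/

section LatticeOrderedGroup

theorem inf_eq_zero_mono {α : Type*} [Lattice α] [Zero α] {a b a' b' : α} (h : a ⊓ b = 0)
    (ha' : 0 ≤ a') (hb' : 0 ≤ b') (haa' : a' ≤ a) (hbb' : b' ≤ b) : a' ⊓ b' = 0 :=
  le_antisymm (h ▸ inf_le_inf haa' hbb') (le_inf ha' hb')

variable {A : Type*} [Lattice A] [AddCommGroup A] [AddLeftMono A] {a b c p e : A}

theorem posPart_le_abs (a : A) : a⁺ ≤ |a| := by
  rw [← posPart_add_negPart]; exact le_add_of_nonneg_right (negPart_nonneg a)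

theorem negPart_le_abs (a : A) : a⁻ ≤ |a| := by
  rw [← posPart_add_negPart]; exact le_add_of_nonneg_left (posPart_nonneg a)

theorem posPart_add_le (a b : A) : (a + b)⁺ ≤ a⁺ + b⁺ :=
  sup_le (add_le_add (le_posPart a) (le_posPart b))
    (add_nonneg (posPart_nonneg a) (posPart_nonneg b))

theorem negPart_add_le (a b : A) : (a + b)⁻ ≤ a⁻ + b⁻ := by
  simpa only [← posPart_neg, neg_add] using posPart_add_le (-a) (-b)

theorem abs_le_iff_neg_le_and_le : |a| ≤ b ↔ -b ≤ a ∧ a ≤ b := by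
  rw [abs_le', neg_le, and_comm]

theorem abs_sub_le_abs_add_abs (a b : A) : |a - b| ≤ |a| + |b| := by
  simpa only [sub_eq_add_neg, abs_neg] using abs_add_le a (-b)

theorem inf_add_le_add_inf (ha : 0 ≤ a) (hb : 0 ≤ b) (hc : 0 ≤ c) :
    a ⊓ (b + c) ≤ a ⊓ b + a ⊓ c :=
  calc a ⊓ (b + c) ≤ (a + a) ⊓ (a + c) ⊓ ((b + a) ⊓ (b + c)) :=
        le_inf (le_inf (inf_le_left.trans (le_add_of_nonneg_left ha))
            (inf_le_left.trans (le_add_of_nonneg_right hc)))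
          (le_inf (inf_le_left.trans (le_add_of_nonneg_left hb)) inf_le_right)
    _ = a ⊓ b + a ⊓ c := by rw [inf_add, add_inf, add_inf]

theorem add_eq_sup_of_inf_eq_zero (h : a ⊓ b = 0) : a + b = a ⊔ b := by
  rw [← inf_add_sup, h, zero_add]

theorem inf_add_eq_zero (ha : 0 ≤ a) (hb : 0 ≤ b) (hc : 0 ≤ c) (hab : a ⊓ b = 0)
    (hac : a ⊓ c = 0) : a ⊓ (b + c) = 0 :=
  le_antisymm ((inf_add_le_add_inf ha hb hc).trans (by rw [hab, hac, add_zero]))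
    (le_inf ha (add_nonneg hb hc))

theorem inf_abs_eq_zero (hp : 0 ≤ p) (h₁ : p ⊓ a⁺ = 0) (h₂ : p ⊓ a⁻ = 0) : p ⊓ |a| = 0 := by
  rw [← posPart_add_negPart]
  exact inf_add_eq_zero hp (posPart_nonneg a) (negPart_nonneg a) h₁ h₂

theorem inf_nsmul_eq_zero (ha : 0 ≤ a) (hb : 0 ≤ b) (h : a ⊓ b = 0) (n : ℕ) :
    a ⊓ n • b = 0 := by
  induction n with
  | zero => rw [zero_nsmul]; exact inf_eq_right.2 ha
  | succ n ih => rw [succ_nsmul]; exact inf_add_eq_zero ha (nsmul_nonneg hb n) hb ih h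

theorem nsmul_inf_nsmul_eq_zero (ha : 0 ≤ a) (hb : 0 ≤ b) (h : a ⊓ b = 0) (m n : ℕ) :
    m • a ⊓ n • b = 0 := by
  have hm : m • a ⊓ b = 0 := by rw [inf_comm] at h ⊢; exact inf_nsmul_eq_zero hb ha h m
  exact inf_nsmul_eq_zero (nsmul_nonneg ha m) hb hm n

theorem posPart_sub_eq_self_of_inf_eq_zero (h : a ⊓ b = 0) : (a - b)⁺ = a := by
  have := inf_eq_sub_posPart_sub a b
  rwa [h, eq_comm, sub_eq_zero, eq_comm] at this

theorem le_posPart_sub_of_inf_eq_zero (hpa : p ≤ a) (hpb : p ⊓ b = 0) : p ≤ (a - b)⁺ :=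
  (posPart_sub_eq_self_of_inf_eq_zero hpb).symm.trans_le (posPart_mono (sub_le_sub_right hpa b))

theorem abs_sub_eq_add_of_inf_eq_zero (h : a ⊓ b = 0) : |a - b| = a + b := by
  rw [← posPart_add_negPart, posPart_sub_eq_self_of_inf_eq_zero h, ← posPart_neg, neg_sub,
    posPart_sub_eq_self_of_inf_eq_zero (inf_comm a b ▸ h)]

theorem abs_add_eq_add_abs_of_posPart_inf_negPart (h₁ : a⁺ ⊓ b⁻ = 0) (h₂ : b⁺ ⊓ a⁻ = 0) :
    |a + b| = |a| + |b| := by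
  have hPN : (a⁺ + b⁺) ⊓ (a⁻ + b⁻) = 0 := by
    rw [inf_comm]
    refine inf_add_eq_zero (add_nonneg (negPart_nonneg a) (negPart_nonneg b))
      (posPart_nonneg a) (posPart_nonneg b) ?_ ?_ <;> rw [inf_comm]
    · exact inf_add_eq_zero (posPart_nonneg a) (negPart_nonneg a) (negPart_nonneg b)
        (posPart_inf_negPart_eq_zero a) h₁
    · exact inf_add_eq_zero (posPart_nonneg b) (negPart_nonneg a) (negPart_nonneg b)
        h₂ (posPart_inf_negPart_eq_zero b)
  calc |a + b| = |(a⁺ + b⁺) - (a⁻ + b⁻)| := by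
        rw [add_sub_add_comm, posPart_sub_negPart, posPart_sub_negPart]
    _ = (a⁺ + b⁺) + (a⁻ + b⁻) := abs_sub_eq_add_of_inf_eq_zero hPN
    _ = |a| + |b| := by rw [add_add_add_comm, posPart_add_negPart, posPart_add_negPart]

theorem abs_add_eq_add_abs_of_abs_inf_abs (h : |a| ⊓ |b| = 0) : |a + b| = |a| + |b| :=
  abs_add_eq_add_abs_of_posPart_inf_negPart
    (inf_eq_zero_mono h (posPart_nonneg a) (negPart_nonneg b) (posPart_le_abs a) (negPart_le_abs b))
    (inf_eq_zero_mono (inf_comm |a| |b| ▸ h) (posPart_nonneg b) (negPart_nonneg a)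
      (posPart_le_abs b) (negPart_le_abs a))

theorem abs_sub_eq_abs_add_of_abs_inf_abs (h : |a| ⊓ |b| = 0) : |a - b| = |a + b| := by
  rw [sub_eq_add_neg, abs_add_eq_add_abs_of_abs_inf_abs (by rwa [abs_neg]), abs_neg,
    abs_add_eq_add_abs_of_abs_inf_abs h]

theorem nsmul_posPart_inf_negPart_le_posPart (a b : A) (k n : ℕ) :
    n • (a⁺ ⊓ b⁻) ≤ (k • a - n • b)⁺ := by
  have hq : 0 ≤ n • (a⁺ ⊓ b⁻) := nsmul_nonneg (le_inf (posPart_nonneg a) (negPart_nonneg b)) n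
  have hsplit : (k • a⁺ + n • b⁻) - (k • a⁻ + n • b⁺) = k • a - n • b :=
    calc _ = k • (a⁺ - a⁻) - n • (b⁺ - b⁻) := by rw [nsmul_sub, nsmul_sub]; abel
      _ = k • a - n • b := by rw [posPart_sub_negPart, posPart_sub_negPart]
  rw [← hsplit]
  refine le_posPart_sub_of_inf_eq_zero
    ((nsmul_le_nsmul_right inf_le_right n).trans
      (le_add_of_nonneg_left (nsmul_nonneg (posPart_nonneg a) k)))
    (inf_add_eq_zero hq (nsmul_nonneg (negPart_nonneg a) k) (nsmul_nonneg (posPart_nonneg b) n)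
      ?_ ?_)
  · exact inf_eq_zero_mono (nsmul_inf_nsmul_eq_zero (posPart_nonneg a) (negPart_nonneg a)
      (posPart_inf_negPart_eq_zero a) n k) hq (nsmul_nonneg (negPart_nonneg a) k)
      (nsmul_le_nsmul_right inf_le_left n) le_rfl
  · exact inf_eq_zero_mono (nsmul_inf_nsmul_eq_zero (negPart_nonneg b) (posPart_nonneg b)
      (inf_comm b⁺ b⁻ ▸ posPart_inf_negPart_eq_zero b) n n) hq (nsmul_nonneg (posPart_nonneg b) n)
      (nsmul_le_nsmul_right inf_le_right n) le_rfl

theorem le_of_disjoint_chain {a b : ℕ → A} {n : ℕ} (hp : 0 ≤ p) (he : 0 ≤ e)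
    (ha : ∀ k, 0 ≤ a k) (hb : ∀ k, 0 ≤ b k) (hab : ∀ k, a k ⊓ b k = 0)
    (hcover : ∀ k, p ≤ a k + b k) (hb₀ : b 0 = 0) (han : a n = 0)
    (hstep : ∀ k, a k ≤ a (k + 1) + e) : p ≤ e := by
  have key : ∀ k, p ⊓ b k ≤ e := by
    intro k
    induction k with
    | zero => rw [hb₀, inf_eq_right.2 hp]; exact he
    | succ k ih =>
      set r := p ⊓ b (k + 1)
      have hr : 0 ≤ r := le_inf hp (hb _)
      have h₁ : r ⊓ a k ≤ e :=
        calc r ⊓ a k ≤ r ⊓ (a (k + 1) + e) := inf_le_inf_left _ (hstep k)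
          _ ≤ r ⊓ a (k + 1) + r ⊓ e := inf_add_le_add_inf hr (ha _) he
          _ ≤ 0 + e := add_le_add (inf_eq_zero_mono (inf_comm (a (k + 1)) _ ▸ hab (k + 1)) hr
              (ha _) inf_le_right le_rfl).le inf_le_right
          _ = e := zero_add e
      have h₂ : r ⊓ b k ≤ e := (inf_le_inf_right _ inf_le_left).trans ih
      have h₃ : r ⊓ a k ⊓ (r ⊓ b k) = 0 :=
        inf_eq_zero_mono (hab k) (le_inf hr (ha k)) (le_inf hr (hb k)) inf_le_right inf_le_right
      calc r = r ⊓ (a k + b k) := (inf_eq_left.2 (inf_le_left.trans (hcover k))).symm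
        _ ≤ r ⊓ a k + r ⊓ b k := inf_add_le_add_inf hr (ha k) (hb k)
        _ = r ⊓ a k ⊔ r ⊓ b k := add_eq_sup_of_inf_eq_zero h₃
        _ ≤ e := sup_le h₁ h₂
  calc p = p ⊓ b n := (inf_eq_left.2 (by simpa [han] using hcover n)).symm
    _ ≤ e := key n

end LatticeOrderedGroup

section Maps

variable {E G : Type*} [Lattice E] [AddGroup E] [Lattice G] [AddGroup G]

def PreservesDisjointness (T : E → G) : Prop :=
  ∀ x y, |x| ⊓ |y| = 0 → |T x| ⊓ |T y| = 0

def IsOrderBounded (T : E → G) : Prop :=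
  ∀ u, 0 ≤ u → ∃ w, ∀ z, 0 ≤ z → z ≤ u → |T z| ≤ w

theorem PreservesDisjointness.neg {T : E → G} (hT : PreservesDisjointness T) :
    PreservesDisjointness (-T) := by
  intro x y h; simpa only [Pi.neg_apply, abs_neg] using hT x y h

theorem IsOrderBounded.neg {T : E → G} (hT : IsOrderBounded T) : IsOrderBounded (-T) := by
  simpa only [IsOrderBounded, Pi.neg_apply, abs_neg] using hT

theorem PreservesDisjointness.abs_map_posPart_inf_abs_map_negPart [AddLeftMono E]
    [AddRightMono E] {T : E → G} (hT : PreservesDisjointness T) (x : E) :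
    |T x⁺| ⊓ |T x⁻| = 0 :=
  hT _ _ (by rw [abs_of_nonneg (posPart_nonneg x), abs_of_nonneg (negPart_nonneg x),
    posPart_inf_negPart_eq_zero])

end Maps

section AdditiveMaps

variable {E G : Type*} [Lattice E] [AddCommGroup E] [AddLeftMono E]
  [Lattice G] [AddCommGroup G] [AddLeftMono G]
  {𝓕 : Type*} [FunLike 𝓕 E G] [AddMonoidHomClass 𝓕 E G] {T : 𝓕}

theorem PreservesDisjointness.abs_map_abs (hT : PreservesDisjointness T) (x : E) :
    |T (|x|)| = |T x| :=
  calc |T (|x|)| = |T x⁺ + T x⁻| := by rw [← map_add, posPart_add_negPart]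
    _ = |T x⁺ - T x⁻| := (abs_sub_eq_abs_add_of_abs_inf_abs
          (hT.abs_map_posPart_inf_abs_map_negPart x)).symm
    _ = |T x| := by rw [← map_sub, posPart_sub_negPart]

theorem nsmul_posPart_map_inf_negPart_map_le (hT : PreservesDisjointness T) {x y : E}
    (hy : 0 ≤ y) (hyx : y ≤ x) {w : G} (hw : ∀ z, 0 ≤ z → z ≤ x → |T z| ≤ w) (n : ℕ) :
    n • ((T x)⁺ ⊓ (T y)⁻) ≤ w := by
  set z : ℕ → E := fun k => n • y - k • x with hz
  have hzs : ∀ k, z (k + 1) = z k - x := fun k => by simp only [hz, succ_nsmul]; abel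
  refine le_of_disjoint_chain (a := fun k => (T (z k)⁺)⁻) (b := fun k => (T (z k)⁻)⁺) (n := n)
    (nsmul_nonneg (le_inf (posPart_nonneg _) (negPart_nonneg _)) n)
    ((abs_nonneg _).trans (hw 0 le_rfl (hy.trans hyx)))
    (fun _ => negPart_nonneg _) (fun _ => posPart_nonneg _) (fun k => ?_) (fun k => ?_) ?_ ?_
    (fun k => ?_)
  · exact inf_eq_zero_mono (hT.abs_map_posPart_inf_abs_map_negPart (z k)) (negPart_nonneg _)
      (posPart_nonneg _) (negPart_le_abs _) (posPart_le_abs _)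
  · have h : T (z k)⁻ + -T (z k)⁺ = k • T x - n • T y := by
      rw [← sub_eq_add_neg, ← map_sub, ← neg_sub (z k)⁺, map_neg, posPart_sub_negPart, hz,
        map_sub, map_nsmul, map_nsmul, neg_sub]
    calc n • ((T x)⁺ ⊓ (T y)⁻) ≤ (k • T x - n • T y)⁺ :=
          nsmul_posPart_inf_negPart_le_posPart (T x) (T y) k n
      _ ≤ (T (z k)⁻)⁺ + (-T (z k)⁺)⁺ := h ▸ posPart_add_le _ _
      _ = (T (z k)⁺)⁻ + (T (z k)⁻)⁺ := by rw [posPart_neg, add_comm]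
  · simp [hz, negPart_eq_zero.2 (nsmul_nonneg hy n)]
  · simp [hz, ← nsmul_sub, posPart_eq_zero.2 (nsmul_nonpos (sub_nonpos.2 hyx) n)]
  · set d := (z k)⁺ - (z (k + 1))⁺
    have hd₀ : 0 ≤ d := sub_nonneg.2 (posPart_mono (hzs k ▸ sub_le_self _ (hy.trans hyx)))
    have hdx : d ≤ x := sub_le_iff_le_add'.2 <|
      calc (z k)⁺ = (z (k + 1) + x)⁺ := by rw [hzs, sub_add_cancel]
        _ ≤ (z (k + 1))⁺ + x :=
          (posPart_add_le _ _).trans_eq (by rw [posPart_eq_self.2 (hy.trans hyx)])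
    calc (T (z k)⁺)⁻ = (T (z (k + 1))⁺ + T d)⁻ := by rw [← map_add, add_sub_cancel]
      _ ≤ (T (z (k + 1))⁺)⁻ + (T d)⁻ := negPart_add_le _ _
      _ ≤ (T (z (k + 1))⁺)⁻ + w := add_le_add le_rfl ((negPart_le_abs _).trans (hw d hd₀ hdx))

theorem posPart_map_inf_negPart_map_eq_zero_of_le
    (hG : ∀ x y : G, (∀ n : ℕ, n • x ≤ y) → x ≤ 0) (hT : PreservesDisjointness T)
    (hTb : IsOrderBounded T) {x y : E} (hy : 0 ≤ y) (hyx : y ≤ x) : (T x)⁺ ⊓ (T y)⁻ = 0 := by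
  obtain ⟨w, hw⟩ := hTb x (hy.trans hyx)
  exact le_antisymm (hG _ w (nsmul_posPart_map_inf_negPart_map_le hT hy hyx hw))
    (le_inf (posPart_nonneg _) (negPart_nonneg _))

theorem posPart_map_inf_negPart_map_eq_zero
    (hG : ∀ x y : G, (∀ n : ℕ, n • x ≤ y) → x ≤ 0) (hT : PreservesDisjointness T)
    (hTb : IsOrderBounded T) {x y : E} (hx : 0 ≤ x) (hy : 0 ≤ y) : (T x)⁺ ⊓ (T y)⁻ = 0 := by
  set p := (T x)⁺ ⊓ (T y)⁻
  have hp : 0 ≤ p := le_inf (posPart_nonneg _) (negPart_nonneg _)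
  have hdisj : ∀ s, x ≤ s → y ≤ s → p ⊓ |T s| = 0 := by
    intro s hxs hys
    have h₁ := posPart_map_inf_negPart_map_eq_zero_of_le hG hT hTb hy hys
    have h₂ := posPart_map_inf_negPart_map_eq_zero_of_le (T := -(T : E →+ G)) hG
      hT.neg hTb.neg hx hxs
    simp only [AddMonoidHom.neg_apply, AddMonoidHom.coe_coe, posPart_neg, negPart_neg] at h₂
    exact inf_abs_eq_zero hp
      (inf_eq_zero_mono (inf_comm (T s)⁺ _ ▸ h₁) hp (posPart_nonneg _) inf_le_right le_rfl)
      (inf_eq_zero_mono (inf_comm (T s)⁻ _ ▸ h₂) hp (negPart_nonneg _) inf_le_left le_rfl)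
  have h₁ := hdisj (x + y) (le_add_of_nonneg_right hy) (le_add_of_nonneg_left hx)
  have h₂ := hdisj (x + (x + y)) (le_add_of_nonneg_right (add_nonneg hx hy))
    ((le_add_of_nonneg_left hx).trans (le_add_of_nonneg_left hx))
  have hx' : p ⊓ |T x| = 0 :=
    inf_eq_zero_mono (inf_add_eq_zero hp (abs_nonneg _) (abs_nonneg _) h₂ h₁) hp (abs_nonneg _)
      le_rfl <| calc
        |T x| = |T (x + (x + y)) - T (x + y)| := by rw [← map_sub, add_sub_cancel_right]
        _ ≤ |T (x + (x + y))| + |T (x + y)| := abs_sub_le_abs_add_abs _ _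
  exact (inf_eq_left.2 (inf_le_left.trans (posPart_le_abs _))).symm.trans hx'

theorem abs_map_add_of_nonneg
    (hG : ∀ x y : G, (∀ n : ℕ, n • x ≤ y) → x ≤ 0) (hT : PreservesDisjointness T)
    (hTb : IsOrderBounded T) {x y : E} (hx : 0 ≤ x) (hy : 0 ≤ y) :
    |T (x + y)| = |T x| + |T y| := by
  rw [map_add]
  exact abs_add_eq_add_abs_of_posPart_inf_negPart
    (posPart_map_inf_negPart_map_eq_zero hG hT hTb hx hy)
    (posPart_map_inf_negPart_map_eq_zero hG hT hTb hy hx)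

theorem abs_map_le_map_abs (hT : ∀ u, 0 ≤ u → 0 ≤ T u) (x : E) : |T x| ≤ T |x| :=
  abs_le'.2 ⟨sub_nonneg.1 (map_sub T _ x ▸ hT _ (sub_nonneg.2 (le_abs_self x))),
    sub_nonneg.1 (by rw [← map_neg, ← map_sub]; exact hT _ (sub_nonneg.2 (neg_le_abs x)))⟩

end AdditiveMaps

section ConeExtension

variable {E : Type*} [Lattice E] [AddCommGroup E] [Module ℝ E]

theorem smul_sup_of_nonneg [PosSMulMono ℝ E] {c : ℝ} (hc : 0 ≤ c) (a b : E) :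
    c • (a ⊔ b) = c • a ⊔ c • b := by
  rcases hc.eq_or_lt with rfl | hc
  · simp
  · exact (OrderIso.smulRight hc).map_sup a b

theorem posPart_smul_of_nonneg [PosSMulMono ℝ E] {c : ℝ} (hc : 0 ≤ c) (a : E) :
    (c • a)⁺ = c • a⁺ := by
  rw [posPart_def, posPart_def, smul_sup_of_nonneg hc, smul_zero]

theorem negPart_smul_of_nonneg [PosSMulMono ℝ E] {c : ℝ} (hc : 0 ≤ c) (a : E) :
    (c • a)⁻ = c • a⁻ := by
  rw [← posPart_neg, ← smul_neg, posPart_smul_of_nonneg hc, posPart_neg]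

theorem abs_smul_of_nonneg [AddLeftMono E] [PosSMulMono ℝ E] {c : ℝ} (hc : 0 ≤ c) (a : E) :
    |c • a| = c • |a| := by
  rw [← posPart_add_negPart, posPart_smul_of_nonneg hc, negPart_smul_of_nonneg hc, ← smul_add,
    posPart_add_negPart]

variable {M : Type*} [AddCommGroup M] [Module ℝ M]

structure IsConeLinear (f : E → M) : Prop where
  map_add : ∀ u v, 0 ≤ u → 0 ≤ v → f (u + v) = f u + f v
  map_smul : ∀ c : ℝ, 0 ≤ c → ∀ u, 0 ≤ u → f (c • u) = c • f u

def coneExtend (f : E → M) (x : E) : M := f x⁺ - f x⁻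

namespace IsConeLinear

variable {f : E → M}

theorem map_zero (hf : IsConeLinear f) : f 0 = 0 := by
  simpa using hf.map_add 0 0 le_rfl le_rfl

theorem coneExtend_of_nonneg [AddLeftMono E] (hf : IsConeLinear f) {x : E} (hx : 0 ≤ x) :
    coneExtend f x = f x := by
  rw [coneExtend, posPart_eq_self.2 hx, negPart_eq_zero.2 hx, hf.map_zero, sub_zero]

theorem coneExtend_add [AddLeftMono E] (hf : IsConeLinear f) (x y : E) :
    coneExtend f (x + y) = coneExtend f x + coneExtend f y := by
  have hparts : (x + y)⁺ + (x⁻ + y⁻) = (x + y)⁻ + (x⁺ + y⁺) := by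
    rw [← sub_eq_zero]
    calc _ = ((x + y)⁺ - (x + y)⁻) - ((x⁺ - x⁻) + (y⁺ - y⁻)) := by abel
      _ = 0 := by rw [posPart_sub_negPart, posPart_sub_negPart, posPart_sub_negPart, sub_self]
  have key : f (x + y)⁺ + (f x⁻ + f y⁻) = f (x + y)⁻ + (f x⁺ + f y⁺) := by
    rw [← hf.map_add _ _ (negPart_nonneg x) (negPart_nonneg y),
      ← hf.map_add _ _ (posPart_nonneg x) (posPart_nonneg y),
      ← hf.map_add _ _ (posPart_nonneg _) (add_nonneg (negPart_nonneg x) (negPart_nonneg y)),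
      ← hf.map_add _ _ (negPart_nonneg _) (add_nonneg (posPart_nonneg x) (posPart_nonneg y)),
      hparts]
  rw [coneExtend, coneExtend, coneExtend, sub_add_sub_comm, sub_eq_sub_iff_add_eq_add, key,
    add_comm]

theorem coneExtend_smul [AddLeftMono E] [PosSMulMono ℝ E] (hf : IsConeLinear f) (c : ℝ)
    (x : E) : coneExtend f (c • x) = c • coneExtend f x := by
  rcases le_total 0 c with hc | hc
  · rw [coneExtend, coneExtend, posPart_smul_of_nonneg hc, negPart_smul_of_nonneg hc,
      hf.map_smul c hc _ (posPart_nonneg x), hf.map_smul c hc _ (negPart_nonneg x), smul_sub]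
  · have hc' : 0 ≤ -c := neg_nonneg.2 hc
    rw [coneExtend, coneExtend, ← neg_smul_neg, posPart_smul_of_nonneg hc',
      negPart_smul_of_nonneg hc', posPart_neg, negPart_neg, hf.map_smul _ hc' _ (negPart_nonneg x),
      hf.map_smul _ hc' _ (posPart_nonneg x), neg_smul, neg_smul, smul_sub]
    abel

end IsConeLinear

theorem exists_bilinear_extension [AddLeftMono E] [PosSMulMono ℝ E] {F : Type*} [Lattice F]
    [AddCommGroup F] [AddLeftMono F] [Module ℝ F] [PosSMulMono ℝ F] (g : E → F → M)
    (h₁ : ∀ v, 0 ≤ v → IsConeLinear (g · v)) (h₂ : ∀ u, 0 ≤ u → IsConeLinear (g u)) :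
    ∃ B : E →ₗ[ℝ] F →ₗ[ℝ] M, ∀ u v, 0 ≤ u → 0 ≤ v → B u v = g u v := by
  have hL : ∀ y, IsConeLinear fun u => coneExtend (g u) y := fun y =>
    { map_add := fun u₁ u₂ hu₁ hu₂ => by
        simp only [coneExtend, (h₁ _ (posPart_nonneg y)).map_add _ _ hu₁ hu₂,
          (h₁ _ (negPart_nonneg y)).map_add _ _ hu₁ hu₂]
        abel
      map_smul := fun c hc u hu => by
        simp only [coneExtend, (h₁ _ (posPart_nonneg y)).map_smul c hc u hu,
          (h₁ _ (negPart_nonneg y)).map_smul c hc u hu, smul_sub] }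
  refine ⟨LinearMap.mk₂ ℝ (fun x y => coneExtend (g x⁺) y - coneExtend (g x⁻) y)
    (fun x₁ x₂ y => (hL y).coneExtend_add x₁ x₂) (fun c x y => (hL y).coneExtend_smul c x)
    (fun x y₁ y₂ => ?_) (fun c x y => ?_), fun u v hu hv => ?_⟩
  · rw [(h₂ _ (posPart_nonneg x)).coneExtend_add, (h₂ _ (negPart_nonneg x)).coneExtend_add]
    abel
  · rw [(h₂ _ (posPart_nonneg x)).coneExtend_smul, (h₂ _ (negPart_nonneg x)).coneExtend_smul,
      smul_sub]
  · exact ((hL v).coneExtend_of_nonneg hu).trans ((h₂ u hu).coneExtend_of_nonneg hv)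

end ConeExtension

theorem isConeLinear_abs_map {E G : Type*} [Lattice E] [AddCommGroup E] [AddLeftMono E]
    [Module ℝ E] [Lattice G] [AddCommGroup G] [AddLeftMono G] [Module ℝ G] [PosSMulMono ℝ G]
    (hG : ∀ x y : G, (∀ n : ℕ, n • x ≤ y) → x ≤ 0) {L : E →ₗ[ℝ] G}
    (hL : PreservesDisjointness L) (hLb : IsOrderBounded L) : IsConeLinear fun u => |L u| where
  map_add _ _ hu hv := abs_map_add_of_nonneg hG hL hLb hu hv
  map_smul c hc u _ := by rw [map_smul, abs_smul_of_nonneg hc]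

theorem abs_map₂_le_map₂_abs {R E F G : Type*} [CommSemiring R]
    [Lattice E] [AddCommGroup E] [AddLeftMono E] [Module R E]
    [Lattice F] [AddCommGroup F] [AddLeftMono F] [Module R F]
    [Lattice G] [AddCommGroup G] [AddLeftMono G] [Module R G]
    (B : E →ₗ[R] F →ₗ[R] G) (hB : ∀ u, 0 ≤ u → ∀ v, 0 ≤ v → 0 ≤ B u v) (x : E) (y : F) :
    |B x y| ≤ B |x| |y| := by
  have hpos : ∀ v, 0 ≤ v → |B x v| ≤ B |x| v := fun v hv =>
    abs_map_le_map_abs (T := B.flip v) (fun u hu => hB u hu v hv) x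
  calc |B x y| = |B x y⁺ - B x y⁻| := by rw [← map_sub, posPart_sub_negPart]
    _ ≤ |B x y⁺| + |B x y⁻| := abs_sub_le_abs_add_abs _ _
    _ ≤ B |x| y⁺ + B |x| y⁻ := add_le_add (hpos _ (posPart_nonneg y)) (hpos _ (negPart_nonneg y))
    _ = B |x| |y| := by rw [← map_add, posPart_add_negPart]

theorem riesz_abs_of_orderBounded_disjointnessPreserving_bilinear_general
    {E F G : Type*}
    [Lattice E] [AddCommGroup E] [Module ℝ E]
    [CovariantClass E E (· + ·) (· ≤ ·)] [PosSMulMono ℝ E]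
    [Lattice F] [AddCommGroup F] [Module ℝ F]
    [CovariantClass F F (· + ·) (· ≤ ·)] [PosSMulMono ℝ F]
    [Lattice G] [AddCommGroup G] [Module ℝ G]
    [CovariantClass G G (· + ·) (· ≤ ·)] [PosSMulMono ℝ G]
    -- archimedean hypotheses
    (hG : ∀ x y : G, (∀ n : ℕ, n • x ≤ y) → x ≤ 0)
    -- the bilinear map `b`
    (b : E →ₗ[ℝ] F →ₗ[ℝ] G)
    -- `b` is order bounded
    (hb_ob : ∀ x : E, 0 ≤ x → ∀ y : F, 0 ≤ y →
      ∃ g : G, ∀ (u : E) (v : F), 0 ≤ u → u ≤ x → 0 ≤ v → v ≤ y →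
        -g ≤ b u v ∧ b u v ≤ g)
    -- `b` is disjointness preserving in each variable
    (hb_dp₁ : ∀ x y : E, |x| ⊓ |y| = 0 → ∀ z : F, |b x z| ⊓ |b y z| = 0)
    (hb_dp₂ : ∀ u v : F, |u| ⊓ |v| = 0 → ∀ t : E, |b t u| ⊓ |b t v| = 0) :
    ∃ B : E →ₗ[ℝ] F →ₗ[ℝ] G,
      -- `B` is positive
      (∀ x : E, 0 ≤ x → ∀ y : F, 0 ≤ y → 0 ≤ B x y) ∧
      -- `B` is disjointness preserving in each variable
      (∀ x y : E, |x| ⊓ |y| = 0 → ∀ z : F, |B x z| ⊓ |B y z| = 0) ∧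
      (∀ u v : F, |u| ⊓ |v| = 0 → ∀ t : E, |B t u| ⊓ |B t v| = 0) ∧
      -- the chain of equalities
      (∀ (x : E) (y : F),
        |b x y| = |b (|x|) (|y|)| ∧ |b (|x|) (|y|)| = |B (|x|) (|y|)| ∧
          |B (|x|) (|y|)| = B (|x|) (|y|)) := by
  have hdp₁ : ∀ v, PreservesDisjointness (b.flip v) := fun v x y h => hb_dp₁ x y h v
  have hdp₂ : ∀ u, PreservesDisjointness (b u) := fun u x y h => hb_dp₂ x y h u
  have hob₁ : ∀ v, 0 ≤ v → IsOrderBounded (b.flip v) := fun v hv u hu =>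
    (hb_ob u hu v hv).imp fun _ hg z hz hzu => abs_le_iff_neg_le_and_le.2 (hg z v hz hzu hv le_rfl)
  have hob₂ : ∀ u, 0 ≤ u → IsOrderBounded (b u) := fun u hu v hv =>
    (hb_ob u hu v hv).imp fun _ hg z hz hzv => abs_le_iff_neg_le_and_le.2 (hg u z hu le_rfl hz hzv)
  obtain ⟨B, hB⟩ := exists_bilinear_extension (fun u v => |b u v|)
    (fun v hv => isConeLinear_abs_map hG (hdp₁ v) (hob₁ v hv))
    (fun u hu => isConeLinear_abs_map hG (hdp₂ u) (hob₂ u hu))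
  have hB_pos : ∀ x : E, 0 ≤ x → ∀ y : F, 0 ≤ y → 0 ≤ B x y := fun x hx y hy =>
    (hB x y hx hy).symm ▸ abs_nonneg _
  have hb_abs : ∀ x y, |b (|x|) (|y|)| = |b x y| := fun x y => by
    rw [(hdp₂ _).abs_map_abs, ← b.flip_apply, (hdp₁ y).abs_map_abs, b.flip_apply]
  have hB_abs : ∀ x y, B (|x|) (|y|) = |b (|x|) (|y|)| := fun x y =>
    hB _ _ (abs_nonneg x) (abs_nonneg y)
  have hB_le : ∀ x y, |B x y| ≤ |b x y| := fun x y =>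
    (abs_map₂_le_map₂_abs B hB_pos x y).trans_eq ((hB_abs x y).trans (hb_abs x y))
  refine ⟨B, hB_pos, fun x y hxy z => ?_, fun u v huv t => ?_, fun x y => ?_⟩
  · exact inf_eq_zero_mono (hb_dp₁ x y hxy z) (abs_nonneg _) (abs_nonneg _) (hB_le x z) (hB_le y z)
  · exact inf_eq_zero_mono (hb_dp₂ u v huv t) (abs_nonneg _) (abs_nonneg _) (hB_le t u) (hB_le t v)
  · exact ⟨(hb_abs x y).symm, by rw [hB_abs, abs_abs], by rw [hB_abs, abs_abs]⟩

/-- Let `E`, `F`, `G` be archimedean Riesz spaces and let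
`b : E × F → G` be an order bounded disjointness preserving bilinear map.
Then there exists an ℓ-bimorphism (positive disjointness preserving bilinear map)
`|b| = B` such that `|b(x,y)| = |b(|x|,|y|)| = |B(|x|,|y|)| = B(|x|,|y|)`. -/
theorem riesz_abs_of_orderBounded_disjointnessPreserving_bilinear
    {E F G : Type*}
    [Lattice E] [AddCommGroup E] [Module ℝ E]
    [CovariantClass E E (· + ·) (· ≤ ·)] [PosSMulMono ℝ E]
    [Lattice F] [AddCommGroup F] [Module ℝ F]
    [CovariantClass F F (· + ·) (· ≤ ·)] [PosSMulMono ℝ F]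
    [Lattice G] [AddCommGroup G] [Module ℝ G]
    [CovariantClass G G (· + ·) (· ≤ ·)] [PosSMulMono ℝ G]
    -- archimedean hypotheses
    (hE : ∀ x y : E, (∀ n : ℕ, n • x ≤ y) → x ≤ 0)
    (hF : ∀ x y : F, (∀ n : ℕ, n • x ≤ y) → x ≤ 0)
    (hG : ∀ x y : G, (∀ n : ℕ, n • x ≤ y) → x ≤ 0)
    -- the bilinear map `b`
    (b : E →ₗ[ℝ] F →ₗ[ℝ] G)
    -- `b` is order bounded
    (hb_ob : ∀ x : E, 0 ≤ x → ∀ y : F, 0 ≤ y →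
      ∃ g : G, ∀ (u : E) (v : F), 0 ≤ u → u ≤ x → 0 ≤ v → v ≤ y →
        -g ≤ b u v ∧ b u v ≤ g)
    -- `b` is disjointness preserving in each variable
    (hb_dp₁ : ∀ x y : E, |x| ⊓ |y| = 0 → ∀ z : F, |b x z| ⊓ |b y z| = 0)
    (hb_dp₂ : ∀ u v : F, |u| ⊓ |v| = 0 → ∀ t : E, |b t u| ⊓ |b t v| = 0) :
    ∃ B : E →ₗ[ℝ] F →ₗ[ℝ] G,
      -- `B` is positive
      (∀ x : E, 0 ≤ x → ∀ y : F, 0 ≤ y → 0 ≤ B x y) ∧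
      -- `B` is disjointness preserving in each variable
      (∀ x y : E, |x| ⊓ |y| = 0 → ∀ z : F, |B x z| ⊓ |B y z| = 0) ∧
      (∀ u v : F, |u| ⊓ |v| = 0 → ∀ t : E, |B t u| ⊓ |B t v| = 0) ∧
      -- the chain of equalities
      (∀ (x : E) (y : F),
        |b x y| = |b (|x|) (|y|)| ∧ |b (|x|) (|y|)| = |B (|x|) (|y|)| ∧
          |B (|x|) (|y|)| = B (|x|) (|y|)) :=
  riesz_abs_of_orderBounded_disjointnessPreserving_bilinear_general hG b hb_ob hb_dp₁ hb_dp₂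
end

section
/- Let $E$, $F$ and $G$ be archimedean Riesz spaces and let $b : E \times F \to G$ be an order bounded disjointness preserving bilinear map. Then there exist positive disjointness preserving bilinear maps ($\ell$-bimorphisms) $b^{+}, b^{-} : E \times F \to G$ such that $b = b^{+} - b^{-}$, and for all $x \in E^{+}$ and $y \in F^{+}$ one has $b^{+}(x,y) = (b(x,y))^{+}$ and $b^{-}(x,y) = (b(x,y))^{-}$. -/
set_option linter.unusedSectionVars false

open Finset

section GroupLemmas
variable {G : Type*} [Lattice G] [AddCommGroup G] [CovariantClass G G (· + ·) (· ≤ ·)]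

private lemma rdp_inf_sub (x y z : G) : x ⊓ y - z = (x - z) ⊓ (y - z) := by
  rw [sub_eq_neg_add, add_inf, ← sub_eq_neg_add, ← sub_eq_neg_add]

private lemma rdp_sub_inf (a x y : G) : a - x ⊓ y = (a - x) ⊔ (a - y) := by
  rw [sub_eq_add_neg, neg_inf, add_sup, ← sub_eq_add_neg, ← sub_eq_add_neg]

private lemma rdp_sub_sup (a x y : G) : a - x ⊔ y = (a - x) ⊓ (a - y) := by
  rw [sub_eq_add_neg, neg_sup, add_inf, ← sub_eq_add_neg, ← sub_eq_add_neg]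

private lemma rdp_sup_sub (x y z : G) : x ⊔ y - z = (x - z) ⊔ (y - z) := by
  rw [sub_eq_neg_add, add_sup, ← sub_eq_neg_add, ← sub_eq_neg_add]

private lemma rdp_inf_add_le {a b c : G} (ha : 0 ≤ a) (hb : 0 ≤ b) (hc : 0 ≤ c) :
    a ⊓ (b + c) ≤ a ⊓ b + a ⊓ c := by
  have h1 : a ⊓ (b + c) ≤ (a ⊓ b) + c := by
    have h2 : a ⊓ (b + c) ≤ (a + c) ⊓ (b + c) :=
      inf_le_inf_right _ (le_add_of_nonneg_right hc)
    have h3 : (a + c) ⊓ (b + c) = (a ⊓ b) + c := by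
      rw [add_comm (a ⊓ b) c, add_inf, add_comm c a, add_comm c b]
    exact h3 ▸ h2
  have h4 : a ⊓ (b + c) ≤ a ⊓ ((a ⊓ b) + c) := le_inf inf_le_left h1
  have h5 : a ⊓ ((a ⊓ b) + c) ≤ (a ⊓ b) + a ⊓ c := by
    rw [← sub_le_iff_le_add']
    rw [rdp_inf_sub]
    have : a - a ⊓ b ≤ a := sub_le_self _ (le_inf ha hb)
    calc (a - a ⊓ b) ⊓ (a ⊓ b + c - a ⊓ b) = (a - a ⊓ b) ⊓ c := by rw [add_sub_cancel_left]
      _ ≤ a ⊓ c := inf_le_inf_right _ this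
  exact le_trans h4 h5

private lemma rdp_posPart_le_abs (a : G) : a⁺ ≤ |a| := by
  rw [posPart_def]
  exact sup_le (le_abs_self a) (abs_nonneg a)

private lemma rdp_negPart_le_abs (a : G) : a⁻ ≤ |a| := by
  rw [negPart_def]
  exact sup_le (neg_le_abs a) (abs_nonneg a)

private lemma rdp_sum_nonneg (f : ℕ → G) (hf : ∀ i, 0 ≤ f i) (n : ℕ) :
    0 ≤ ∑ i ∈ range n, f i := by
  induction n with
  | zero => simp
  | succ n ih => rw [Finset.sum_range_succ]; exact add_nonneg ih (hf n)

private lemma rdp_posPart_add_le (a b : G) : (a + b)⁺ ≤ a⁺ + b⁺ := by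
  rw [posPart_def, posPart_def, posPart_def]
  exact sup_le (add_le_add le_sup_left le_sup_left)
    (add_nonneg le_sup_right le_sup_right)

private lemma rdp_posPart_sub_le (a b : G) : (a - b)⁺ ≤ a⁺ + b⁻ := by
  rw [posPart_def, posPart_def, negPart_def]
  refine sup_le ?_ (add_nonneg le_sup_right le_sup_right)
  have : a - b ≤ (a ⊔ 0) + (-b ⊔ 0) := by
    rw [sub_eq_add_neg]; exact add_le_add le_sup_left le_sup_left
  exact this

private lemma rdp_eq_posPart {p n : G} (hpn : p ⊓ n = 0) : (p - n)⁺ = p := by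
  rw [posPart_def]
  calc (p - n) ⊔ 0 = (p - n) ⊔ (p - p) := by rw [sub_self]
    _ = p - (n ⊓ p) := by rw [rdp_sub_inf]
    _ = p := by rw [inf_comm, hpn, sub_zero]

private lemma rdp_posPart_add {a c : G} (h1 : a⁺ ⊓ c⁻ = 0) (h2 : a⁻ ⊓ c⁺ = 0) :
    (a + c)⁺ = a⁺ + c⁺ := by
  have hd : (a⁺ + c⁺) ⊓ (a⁻ + c⁻) = 0 := by
    refine le_antisymm ?_ (le_inf (add_nonneg (posPart_nonneg _) (posPart_nonneg _))
      (add_nonneg (negPart_nonneg _) (negPart_nonneg _)))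
    have hP : (0:G) ≤ a⁺ + c⁺ := add_nonneg (posPart_nonneg _) (posPart_nonneg _)
    calc (a⁺ + c⁺) ⊓ (a⁻ + c⁻)
        ≤ (a⁺ + c⁺) ⊓ a⁻ + (a⁺ + c⁺) ⊓ c⁻ :=
          rdp_inf_add_le hP (negPart_nonneg _) (negPart_nonneg _)
      _ ≤ (a⁻ ⊓ a⁺ + a⁻ ⊓ c⁺) + (c⁻ ⊓ a⁺ + c⁻ ⊓ c⁺) := by
          refine add_le_add ?_ ?_
          · rw [inf_comm]
            exact rdp_inf_add_le (negPart_nonneg _) (posPart_nonneg _) (posPart_nonneg _)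
          · rw [inf_comm]
            exact rdp_inf_add_le (negPart_nonneg _) (posPart_nonneg _) (posPart_nonneg _)
      _ = 0 := by
          rw [inf_comm a⁻ a⁺, posPart_inf_negPart_eq_zero, h2, inf_comm c⁻ a⁺, h1,
            inf_comm c⁻ c⁺, posPart_inf_negPart_eq_zero]
          simp
  have key : a⁺ + c⁺ - (a⁻ + c⁻) = a + c := by
    calc a⁺ + c⁺ - (a⁻ + c⁻) = (a⁺ - a⁻) + (c⁺ - c⁻) := by abel
      _ = a + c := by rw [posPart_sub_negPart, posPart_sub_negPart]
  rw [← key]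
  exact rdp_eq_posPart hd

private lemma rdp_posPart_sum (f : ℕ → G) (n : ℕ) :
    (∑ i ∈ range n, f i)⁺ ≤ ∑ i ∈ range n, (f i)⁺ := by
  induction n with
  | zero => simp
  | succ n ih =>
    rw [Finset.sum_range_succ, Finset.sum_range_succ]
    exact le_trans (rdp_posPart_add_le _ _) (add_le_add ih le_rfl)

private lemma rdp_sum_le_sum (f g : ℕ → G) (h : ∀ i, f i ≤ g i) (n : ℕ) :
    ∑ i ∈ range n, f i ≤ ∑ i ∈ range n, g i := by
  induction n with
  | zero => simp
  | succ n ih => rw [Finset.sum_range_succ, Finset.sum_range_succ]; exact add_le_add ih (h n)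

private lemma rdp_le_sum_inf (f : ℕ → G) (hf : ∀ i, 0 ≤ f i) (n : ℕ) :
    ∀ q : G, 0 ≤ q → q ≤ ∑ i ∈ range n, f i → q ≤ ∑ i ∈ range n, q ⊓ f i := by
  induction n with
  | zero => intro q hq0 hq1; simpa using hq1
  | succ n ih =>
    intro q hq0 hq1
    rw [Finset.sum_range_succ] at hq1
    rw [Finset.sum_range_succ]
    have hS : (0:G) ≤ ∑ i ∈ range n, f i := rdp_sum_nonneg f hf n
    have h2 : q = q ⊓ (∑ i ∈ range n, f i + f n) := (inf_eq_left.mpr hq1).symm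
    have h3 : q ≤ q ⊓ (∑ i ∈ range n, f i) + q ⊓ f n :=
      le_trans (le_of_eq h2) (rdp_inf_add_le hq0 hS (hf n))
    have h4 : q ⊓ (∑ i ∈ range n, f i) ≤ ∑ i ∈ range n, q ⊓ f i := by
      have h5 := ih (q ⊓ (∑ i ∈ range n, f i)) (le_inf hq0 hS) inf_le_right
      refine le_trans h5 (rdp_sum_le_sum _ _ (fun i => ?_) n)
      exact inf_le_inf_right _ inf_le_left
    exact le_trans h3 (add_le_add h4 le_rfl)

private lemma rdp_inf_sum_eq_zero (f : ℕ → G) (a : G) (ha : 0 ≤ a) (hf : ∀ i, 0 ≤ f i)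
    (n : ℕ) (h : ∀ i, i < n → a ⊓ f i = 0) : a ⊓ ∑ i ∈ range n, f i = 0 := by
  induction n with
  | zero => simpa using le_antisymm inf_le_right (le_inf ha le_rfl)
  | succ n ih =>
    rw [Finset.sum_range_succ]
    refine le_antisymm ?_ (le_inf ha (add_nonneg (rdp_sum_nonneg f hf n) (hf n)))
    calc a ⊓ (∑ i ∈ range n, f i + f n)
        ≤ a ⊓ (∑ i ∈ range n, f i) + a ⊓ f n :=
          rdp_inf_add_le ha (rdp_sum_nonneg f hf n) (hf n)
      _ = 0 := by
          rw [ih (fun i hi => h i (hi.trans (Nat.lt_succ_self n))), h n (Nat.lt_succ_self n),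
            add_zero]

private lemma rdp_disjoint_sum_le (t : ℕ → G) (g : G) (hg : 0 ≤ g) (h0 : ∀ i, 0 ≤ t i)
    (hle : ∀ i, t i ≤ g) (hd : ∀ i j, i < j → t i ⊓ t j = 0) (n : ℕ) :
    ∑ i ∈ range n, t i ≤ g := by
  induction n with
  | zero => simpa using hg
  | succ n ih =>
    rw [Finset.sum_range_succ]
    have hdn : t n ⊓ ∑ i ∈ range n, t i = 0 :=
      rdp_inf_sum_eq_zero t (t n) (h0 n) h0 n fun i hi => by rw [inf_comm]; exact hd i n hi
    have hS : (0:G) ≤ ∑ i ∈ range n, t i := rdp_sum_nonneg t h0 n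
    calc ∑ i ∈ range n, t i + t n
        = (∑ i ∈ range n, t i) ⊓ t n + (∑ i ∈ range n, t i) ⊔ t n := by
          rw [inf_add_sup]
      _ = (∑ i ∈ range n, t i) ⊔ t n := by rw [inf_comm, hdn, zero_add]
      _ ≤ g := sup_le ih (hle n)

end GroupLemmas

section SmulLemmas
variable {G : Type*} [Lattice G] [AddCommGroup G] [CovariantClass G G (· + ·) (· ≤ ·)]
  [Module ℝ G] [PosSMulMono ℝ G]

private lemma rdp_smul_sup {c : ℝ} (hc : 0 < c) (x y : G) :
    c • (x ⊔ y) = (c • x) ⊔ (c • y) := by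
  refine le_antisymm ?_ (sup_le (smul_le_smul_of_nonneg_left le_sup_left hc.le)
    (smul_le_smul_of_nonneg_left le_sup_right hc.le))
  have h1 : x ⊔ y ≤ c⁻¹ • ((c • x) ⊔ (c • y)) := by
    refine sup_le ?_ ?_
    · have := smul_le_smul_of_nonneg_left (le_sup_left : c • x ≤ (c • x) ⊔ (c • y))
        (inv_nonneg.mpr hc.le)
      rwa [smul_smul, inv_mul_cancel₀ hc.ne', one_smul] at this
    · have := smul_le_smul_of_nonneg_left (le_sup_right : c • y ≤ (c • x) ⊔ (c • y))
        (inv_nonneg.mpr hc.le)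
      rwa [smul_smul, inv_mul_cancel₀ hc.ne', one_smul] at this
  have := smul_le_smul_of_nonneg_left h1 hc.le
  rwa [smul_smul, mul_inv_cancel₀ hc.ne', one_smul] at this

private lemma rdp_smul_inf {c : ℝ} (hc : 0 < c) (x y : G) :
    c • (x ⊓ y) = (c • x) ⊓ (c • y) := by
  refine le_antisymm (le_inf (smul_le_smul_of_nonneg_left inf_le_left hc.le)
    (smul_le_smul_of_nonneg_left inf_le_right hc.le)) ?_
  have h1 : c⁻¹ • ((c • x) ⊓ (c • y)) ≤ x ⊓ y := by
    refine le_inf ?_ ?_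
    · have := smul_le_smul_of_nonneg_left (inf_le_left : (c • x) ⊓ (c • y) ≤ c • x)
        (inv_nonneg.mpr hc.le)
      rwa [smul_smul, inv_mul_cancel₀ hc.ne', one_smul] at this
    · have := smul_le_smul_of_nonneg_left (inf_le_right : (c • x) ⊓ (c • y) ≤ c • y)
        (inv_nonneg.mpr hc.le)
      rwa [smul_smul, inv_mul_cancel₀ hc.ne', one_smul] at this
  have := smul_le_smul_of_nonneg_left h1 hc.le
  rwa [smul_smul, mul_inv_cancel₀ hc.ne', one_smul] at this

private lemma rdp_smul_posPart {c : ℝ} (hc : 0 ≤ c) (x : G) : (c • x)⁺ = c • x⁺ := by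
  rcases eq_or_lt_of_le hc with rfl | hc'
  · simp
  · rw [posPart_def, posPart_def, rdp_smul_sup hc', smul_zero]

private lemma rdp_smul_negPart {c : ℝ} (hc : 0 ≤ c) (x : G) : (c • x)⁻ = c • x⁻ := by
  rw [negPart_def, negPart_def, ← smul_neg]
  have := rdp_smul_posPart hc (-x)
  rw [posPart_def, posPart_def] at this
  exact this

private lemma rdp_le_smul {c : ℝ} (hc : 1 ≤ c) {a : G} (ha : 0 ≤ a) : a ≤ c • a := by
  have h := smul_nonneg (sub_nonneg.mpr hc) ha
  rw [sub_smul, one_smul] at h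
  exact sub_nonneg.mp h

end SmulLemmas

section ExtLemmas
variable {E V : Type*} [Lattice E] [AddCommGroup E] [CovariantClass E E (· + ·) (· ≤ ·)]
  [Module ℝ E] [PosSMulMono ℝ E] [AddCommGroup V] [Module ℝ V]

private lemma rdp_posPart_eq_add (a : E) : a⁺ = a + a⁻ :=
  eq_add_of_sub_eq (posPart_sub_negPart a)

private lemma rdp_ext_add (h : E → V)
    (hadd : ∀ a b : E, 0 ≤ a → 0 ≤ b → h (a + b) = h a + h b) (x1 x2 : E) :
    h ((x1 + x2)⁺) - h ((x1 + x2)⁻) =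
      (h (x1⁺) - h (x1⁻)) + (h (x2⁺) - h (x2⁻)) := by
  have key : (x1 + x2)⁺ + (x1⁻ + x2⁻) = (x1 + x2)⁻ + (x1⁺ + x2⁺) := by
    rw [rdp_posPart_eq_add (x1 + x2), rdp_posPart_eq_add x1, rdp_posPart_eq_add x2]
    abel
  have e1 : h ((x1 + x2)⁺) + (h (x1⁻) + h (x2⁻)) = h ((x1 + x2)⁻) + (h (x1⁺) + h (x2⁺)) := by
    calc h ((x1 + x2)⁺) + (h (x1⁻) + h (x2⁻))
        = h ((x1 + x2)⁺) + h (x1⁻ + x2⁻) := by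
          rw [hadd _ _ (negPart_nonneg _) (negPart_nonneg _)]
      _ = h ((x1 + x2)⁺ + (x1⁻ + x2⁻)) := (hadd _ _ (posPart_nonneg _)
          (add_nonneg (negPart_nonneg _) (negPart_nonneg _))).symm
      _ = h ((x1 + x2)⁻ + (x1⁺ + x2⁺)) := by rw [key]
      _ = h ((x1 + x2)⁻) + h (x1⁺ + x2⁺) := hadd _ _ (negPart_nonneg _)
          (add_nonneg (posPart_nonneg _) (posPart_nonneg _))
      _ = h ((x1 + x2)⁻) + (h (x1⁺) + h (x2⁺)) := by
          rw [hadd _ _ (posPart_nonneg _) (posPart_nonneg _)]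
  apply add_right_cancel (b := h ((x1 + x2)⁻) + (h (x1⁻) + h (x2⁻)))
  calc h ((x1 + x2)⁺) - h ((x1 + x2)⁻) + (h ((x1 + x2)⁻) + (h (x1⁻) + h (x2⁻)))
      = h ((x1 + x2)⁺) + (h (x1⁻) + h (x2⁻)) := by abel
    _ = h ((x1 + x2)⁻) + (h (x1⁺) + h (x2⁺)) := e1
    _ = (h (x1⁺) - h (x1⁻)) + (h (x2⁺) - h (x2⁻)) +
        (h ((x1 + x2)⁻) + (h (x1⁻) + h (x2⁻))) := by abel

private lemma rdp_ext_smul (h : E → V)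
    (hsmul : ∀ c : ℝ, 0 ≤ c → ∀ a : E, h (c • a) = c • h a) (c : ℝ) (x : E) :
    h ((c • x)⁺) - h ((c • x)⁻) = c • (h (x⁺) - h (x⁻)) := by
  rcases le_or_gt 0 c with hc | hc
  · rw [rdp_smul_posPart hc, rdp_smul_negPart hc, hsmul c hc, hsmul c hc, smul_sub]
  · have hc' : (0:ℝ) ≤ -c := by linarith
    have e1 : c • x = (-c) • (-x) := by rw [neg_smul, smul_neg, neg_neg]
    have e2 : (c • x)⁺ = (-c) • x⁻ := by
      rw [e1, rdp_smul_posPart hc', posPart_neg]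
    have e3 : (c • x)⁻ = (-c) • x⁺ := by
      rw [e1, rdp_smul_negPart hc', negPart_neg]
    rw [e2, e3, hsmul _ hc', hsmul _ hc', neg_smul, neg_smul, smul_sub]
    abel

end ExtLemmas

section Core
variable {E G : Type*}
  [Lattice E] [AddCommGroup E] [Module ℝ E]
  [CovariantClass E E (· + ·) (· ≤ ·)] [PosSMulMono ℝ E]
  [Lattice G] [AddCommGroup G] [Module ℝ G]
  [CovariantClass G G (· + ·) (· ≤ ·)] [PosSMulMono ℝ G]

private lemma rdp_core (hG : ∀ x y : G, (∀ n : ℕ, n • x ≤ y) → x ≤ 0)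
    (T : E →ₗ[ℝ] G)
    (hdp : ∀ a c : E, |a| ⊓ |c| = 0 → |T a| ⊓ |T c| = 0)
    (u z : E) (hu : 0 ≤ u) (huz : u ≤ z)
    (g : G) (hg : ∀ w : E, 0 ≤ w → w ≤ z → -g ≤ T w ∧ T w ≤ g)
    (q : G) (hq0 : 0 ≤ q) (hq1 : q ≤ (T u)⁺) (hq2 : q ⊓ (T z)⁺ = 0) : q = 0 := by
  have hz : 0 ≤ z := le_trans hu huz
  have hgpos : 0 ≤ g := by
    have := (hg 0 le_rfl hz).2
    simpa using this
  refine le_antisymm (hG q g ?_) hq0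
  intro n
  rcases Nat.eq_zero_or_pos n with rfl | hn
  · simpa using hgpos
  have hnR : (0:ℝ) < (n:ℝ) := by exact_mod_cast hn
  have hnR1 : (1:ℝ) ≤ (n:ℝ) := by exact_mod_cast hn
  -- the staircase
  set U : ℕ → E := fun k => ((n : ℝ) • u - (k : ℝ) • z)⁺ with hU
  set s : ℕ → E := fun k => U k ⊓ z with hs
  have hU0 : ∀ k, 0 ≤ U k := fun k => posPart_nonneg _
  have hs0 : ∀ k, 0 ≤ s k := fun k => le_inf (hU0 k) hz
  have hsz : ∀ k, s k ≤ z := fun k => inf_le_right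
  have hUsucc : ∀ k, U (k + 1) = (U k - z)⁺ := by
    intro k
    have hnz : (-z) ⊔ 0 = 0 := sup_eq_right.mpr (neg_nonpos.mpr hz)
    have e1 : U k - z = ((n : ℝ) • u - ((k:ℝ) + 1) • z) ⊔ (-z) := by
      rw [hU]
      simp only []
      rw [posPart_def, rdp_sup_sub, zero_sub, add_smul, one_smul]
      congr 1
      abel
    calc U (k + 1) = ((n : ℝ) • u - ((k:ℝ) + 1) • z)⁺ := by
          rw [hU]; norm_num
      _ = (((n : ℝ) • u - ((k:ℝ) + 1) • z) ⊔ (-z)) ⊔ 0 := by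
          rw [posPart_def, sup_assoc, hnz]
      _ = (U k - z)⁺ := by rw [posPart_def, e1]
  have hUanti : ∀ k, U (k + 1) ≤ U k := by
    intro k
    rw [hUsucc k, posPart_def]
    exact sup_le (sub_le_self _ hz) (hU0 k)
  have hUmono : Antitone U := antitone_nat_of_succ_le hUanti
  have hsk : ∀ k, s k = U k - U (k + 1) := by
    intro k
    rw [hUsucc k, posPart_def]
    calc s k = z ⊓ U k := inf_comm _ _
      _ = (U k - (U k - z)) ⊓ (U k - 0) := by rw [sub_sub_cancel, sub_zero]
      _ = U k - ((U k - z) ⊔ 0) := (rdp_sub_sup _ _ _).symm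
  have hU0eq : U 0 = (n : ℝ) • u := by
    rw [hU]
    simp only [Nat.cast_zero, zero_smul, sub_zero]
    exact posPart_eq_self.mpr (smul_nonneg hnR.le hu)
  have hUn : U n = 0 := by
    rw [hU]
    simp only []
    rw [← smul_sub]
    refine posPart_eq_zero.mpr ?_
    have := smul_le_smul_of_nonneg_left (sub_nonpos.mpr huz) hnR.le
    simpa using this
  have hsumu : ∑ k ∈ range n, s k = (n : ℝ) • u := by
    have : ∑ k ∈ range n, (U k - U (k + 1)) = U 0 - U n := Finset.sum_range_sub' U n
    calc ∑ k ∈ range n, s k = ∑ k ∈ range n, (U k - U (k + 1)) := by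
          refine Finset.sum_congr rfl fun k _ => hsk k
      _ = U 0 - U n := this
      _ = (n : ℝ) • u := by rw [hU0eq, hUn, sub_zero]
  have hdisj : ∀ k j, k < j → s j ⊓ (z - s k) = 0 := by
    intro k j hkj
    have h1 : s j ≤ (U k - z)⁺ := by
      calc s j ≤ U j := inf_le_left
        _ ≤ U (k + 1) := hUmono hkj
        _ = (U k - z)⁺ := hUsucc k
    have h2 : z - s k = (U k - z)⁻ := by
      rw [hs]
      simp only []
      rw [rdp_sub_inf, sub_self, negPart_def, neg_sub]
    refine le_antisymm ?_ (le_inf (hs0 j) (sub_nonneg.mpr (hsz k)))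
    calc s j ⊓ (z - s k) ≤ (U k - z)⁺ ⊓ (U k - z)⁻ :=
          inf_le_inf h1 (le_of_eq h2)
      _ = 0 := posPart_inf_negPart_eq_zero _
  -- push through T
  set A : ℕ → G := fun k => (T (s k))⁺ with hA
  have hA0 : ∀ k, 0 ≤ A k := fun k => posPart_nonneg _
  have hAg : ∀ k, A k ≤ g := by
    intro k
    rw [hA]
    simp only [posPart_def]
    exact sup_le (hg (s k) (hs0 k) (hsz k)).2 hgpos
  set t : ℕ → G := fun k => ((n : ℝ) • q) ⊓ A k with ht
  have hnq0 : 0 ≤ (n : ℝ) • q := smul_nonneg hnR.le hq0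
  have ht0 : ∀ k, 0 ≤ t k := fun k => le_inf hnq0 (hA0 k)
  have htg : ∀ k, t k ≤ g := fun k => le_trans inf_le_right (hAg k)
  have hq2' : ∀ c : G, 0 ≤ c → c ≤ (n : ℝ) • q → c ⊓ (T z)⁺ = 0 := by
    intro c hc0 hcq
    refine le_antisymm ?_ (le_inf hc0 (posPart_nonneg _))
    calc c ⊓ (T z)⁺ ≤ ((n : ℝ) • q) ⊓ ((n : ℝ) • (T z)⁺) :=
          inf_le_inf hcq (rdp_le_smul hnR1 (posPart_nonneg _))
      _ = (n : ℝ) • (q ⊓ (T z)⁺) := (rdp_smul_inf hnR _ _).symm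
      _ = 0 := by rw [hq2, smul_zero]
  have hts : ∀ k j, k < j → t k ⊓ t j = 0 := by
    intro k j hkj
    have hw0 : 0 ≤ t k ⊓ t j := le_inf (ht0 k) (ht0 j)
    have hwq : t k ⊓ t j ≤ (n : ℝ) • q := le_trans inf_le_left inf_le_left
    have hwAj : t k ⊓ t j ≤ |T (s j)| := by
      refine le_trans inf_le_right (le_trans inf_le_right ?_)
      rw [hA]
      exact rdp_posPart_le_abs _
    have hdisjT : |T (s j)| ⊓ |T (z - s k)| = 0 := by
      refine hdp _ _ ?_
      rw [abs_of_nonneg (hs0 j), abs_of_nonneg (sub_nonneg.mpr (hsz k))]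
      exact hdisj k j hkj
    have hTk : T (s k) = T z - T (z - s k) := by rw [map_sub, sub_sub_cancel]
    have hwk : t k ⊓ t j ≤ (T z)⁺ + (T (z - s k))⁻ := by
      refine le_trans (le_trans inf_le_left inf_le_right) ?_
      rw [hA]
      simp only []
      rw [hTk]
      exact rdp_posPart_sub_le _ _
    have e1 : (t k ⊓ t j) ⊓ (T z)⁺ = 0 := hq2' _ hw0 hwq
    have e2 : (t k ⊓ t j) ⊓ (T (z - s k))⁻ = 0 := by
      refine le_antisymm ?_ (le_inf hw0 (negPart_nonneg _))
      calc (t k ⊓ t j) ⊓ (T (z - s k))⁻ ≤ |T (s j)| ⊓ |T (z - s k)| :=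
            inf_le_inf hwAj (rdp_negPart_le_abs _)
        _ = 0 := hdisjT
    refine le_antisymm ?_ hw0
    calc t k ⊓ t j = (t k ⊓ t j) ⊓ ((T z)⁺ + (T (z - s k))⁻) := (inf_eq_left.mpr hwk).symm
      _ ≤ (t k ⊓ t j) ⊓ (T z)⁺ + (t k ⊓ t j) ⊓ (T (z - s k))⁻ :=
          rdp_inf_add_le hw0 (posPart_nonneg _) (negPart_nonneg _)
      _ = 0 := by rw [e1, e2, add_zero]
  have h1 : (n : ℝ) • q ≤ ∑ k ∈ range n, A k := by
    calc (n : ℝ) • q ≤ (n : ℝ) • (T u)⁺ := smul_le_smul_of_nonneg_left hq1 hnR.le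
      _ = ((n : ℝ) • T u)⁺ := (rdp_smul_posPart hnR.le _).symm
      _ = (T ((n : ℝ) • u))⁺ := by rw [map_smul]
      _ = (T (∑ k ∈ range n, s k))⁺ := by rw [hsumu]
      _ = (∑ k ∈ range n, T (s k))⁺ := by rw [map_sum]
      _ ≤ ∑ k ∈ range n, A k := rdp_posPart_sum _ n
  have h2 : (n : ℝ) • q ≤ ∑ k ∈ range n, t k :=
    rdp_le_sum_inf A hA0 n _ hnq0 h1
  have h3 : ∑ k ∈ range n, t k ≤ g := rdp_disjoint_sum_le t g hgpos ht0 htg hts n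
  calc n • q = (n : ℝ) • q := (Nat.cast_smul_eq_nsmul ℝ n q).symm
    _ ≤ g := le_trans h2 h3

end Core

section Op
variable {E G : Type*}
  [Lattice E] [AddCommGroup E] [Module ℝ E]
  [CovariantClass E E (· + ·) (· ≤ ·)] [PosSMulMono ℝ E]
  [Lattice G] [AddCommGroup G] [Module ℝ G]
  [CovariantClass G G (· + ·) (· ≤ ·)] [PosSMulMono ℝ G]

private lemma rdp_op (hG : ∀ x y : G, (∀ n : ℕ, n • x ≤ y) → x ≤ 0)
    (T : E →ₗ[ℝ] G)
    (hdp : ∀ a c : E, |a| ⊓ |c| = 0 → |T a| ⊓ |T c| = 0)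
    (x y : E) (hx : 0 ≤ x) (hy : 0 ≤ y)
    (g : G) (hg : ∀ w : E, 0 ≤ w → w ≤ x + y → -g ≤ T w ∧ T w ≤ g) :
    (T x)⁺ ⊓ (T y)⁻ = 0 := by
  have hxz : x ≤ x + y := le_add_of_nonneg_right hy
  have hyz : y ≤ x + y := le_add_of_nonneg_left hx
  have hdpN : ∀ a c : E, |a| ⊓ |c| = 0 → |(-T) a| ⊓ |(-T) c| = 0 := by
    intro a c h
    simpa [LinearMap.neg_apply, abs_neg] using hdp a c h
  have hgN : ∀ w : E, 0 ≤ w → w ≤ x + y → -g ≤ (-T) w ∧ (-T) w ≤ g := by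
    intro w h1 h2
    obtain ⟨l, r⟩ := hg w h1 h2
    constructor
    · simpa [LinearMap.neg_apply] using neg_le_neg_iff.mpr r
    · simpa [LinearMap.neg_apply] using neg_le_neg_iff.mpr l
  have step1 : (T y)⁻ ⊓ (T (x + y))⁺ = 0 := by
    refine rdp_core hG (-T) hdpN y (x + y) hy hyz g hgN _
      (le_inf (negPart_nonneg _) (posPart_nonneg _)) ?_ ?_
    · have : ((-T) y)⁺ = (T y)⁻ := by
        rw [LinearMap.neg_apply, posPart_neg]
      rw [this]
      exact inf_le_left
    · have e : ((-T) (x + y))⁺ = (T (x + y))⁻ := by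
        rw [LinearMap.neg_apply, posPart_neg]
      rw [e]
      refine le_antisymm ?_ (le_inf (le_inf (negPart_nonneg _) (posPart_nonneg _))
        (negPart_nonneg _))
      calc (T y)⁻ ⊓ (T (x + y))⁺ ⊓ (T (x + y))⁻ ≤ (T (x + y))⁺ ⊓ (T (x + y))⁻ :=
            inf_le_inf inf_le_right le_rfl
        _ = 0 := posPart_inf_negPart_eq_zero _
  refine rdp_core hG T hdp x (x + y) hx hxz g hg _
    (le_inf (posPart_nonneg _) (negPart_nonneg _)) inf_le_left ?_
  refine le_antisymm ?_ (le_inf (le_inf (posPart_nonneg _) (negPart_nonneg _))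
    (posPart_nonneg _))
  calc (T x)⁺ ⊓ (T y)⁻ ⊓ (T (x + y))⁺ ≤ (T y)⁻ ⊓ (T (x + y))⁺ :=
        inf_le_inf inf_le_right le_rfl
    _ = 0 := step1

end Op

section Bilinear
variable {E F G : Type*}
  [Lattice E] [AddCommGroup E] [Module ℝ E]
  [CovariantClass E E (· + ·) (· ≤ ·)] [PosSMulMono ℝ E]
  [Lattice F] [AddCommGroup F] [Module ℝ F]
  [CovariantClass F F (· + ·) (· ≤ ·)] [PosSMulMono ℝ F]
  [Lattice G] [AddCommGroup G] [Module ℝ G]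
  [CovariantClass G G (· + ·) (· ≤ ·)] [PosSMulMono ℝ G]

private lemma rdp_exists_posPart (hG : ∀ x y : G, (∀ n : ℕ, n • x ≤ y) → x ≤ 0)
    (b : E →ₗ[ℝ] F →ₗ[ℝ] G)
    (hb_ob : ∀ x : E, 0 ≤ x → ∀ y : F, 0 ≤ y →
      ∃ g : G, ∀ (u : E) (v : F), 0 ≤ u → u ≤ x → 0 ≤ v → v ≤ y →
        -g ≤ b u v ∧ b u v ≤ g)
    (hb_dp₁ : ∀ x y : E, |x| ⊓ |y| = 0 → ∀ z : F, |b x z| ⊓ |b y z| = 0)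
    (hb_dp₂ : ∀ u v : F, |u| ⊓ |v| = 0 → ∀ t : E, |b t u| ⊓ |b t v| = 0) :
    ∃ bp : E →ₗ[ℝ] F →ₗ[ℝ] G, ∀ x : E, 0 ≤ x → ∀ y : F, 0 ≤ y → bp x y = (b x y)⁺ := by
  -- cone additivity in the first variable
  have coneAdd1 : ∀ (x1 x2 : E) (y : F), 0 ≤ x1 → 0 ≤ x2 → 0 ≤ y →
      (b (x1 + x2) y)⁺ = (b x1 y)⁺ + (b x2 y)⁺ := by
    intro x1 x2 y h1 h2 hy
    obtain ⟨g, hg⟩ := hb_ob (x1 + x2) (add_nonneg h1 h2) y hy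
    have hbound : ∀ w : E, 0 ≤ w → w ≤ x1 + x2 →
        -g ≤ (b.flip y) w ∧ (b.flip y) w ≤ g := by
      intro w hw1 hw2
      simpa [LinearMap.flip_apply] using hg w y hw1 hw2 hy le_rfl
    have hbound' : ∀ w : E, 0 ≤ w → w ≤ x2 + x1 →
        -g ≤ (b.flip y) w ∧ (b.flip y) w ≤ g := by
      intro w hw1 hw2
      exact hbound w hw1 (by rwa [add_comm])
    have hdpf : ∀ a c : E, |a| ⊓ |c| = 0 → |(b.flip y) a| ⊓ |(b.flip y) c| = 0 := by
      intro a c h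
      simpa [LinearMap.flip_apply] using hb_dp₁ a c h y
    have H1 : ((b.flip y) x1)⁺ ⊓ ((b.flip y) x2)⁻ = 0 :=
      rdp_op hG (b.flip y) hdpf x1 x2 h1 h2 g hbound
    have H2 : ((b.flip y) x2)⁺ ⊓ ((b.flip y) x1)⁻ = 0 :=
      rdp_op hG (b.flip y) hdpf x2 x1 h2 h1 g hbound'
    simp only [LinearMap.flip_apply] at H1 H2
    have e : b (x1 + x2) y = b x1 y + b x2 y := by
      rw [map_add, LinearMap.add_apply]
    rw [e]
    exact rdp_posPart_add H1 (by rwa [inf_comm])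
  -- cone additivity in the second variable
  have coneAdd2 : ∀ (x : E) (y1 y2 : F), 0 ≤ x → 0 ≤ y1 → 0 ≤ y2 →
      (b x (y1 + y2))⁺ = (b x y1)⁺ + (b x y2)⁺ := by
    intro x y1 y2 hx h1 h2
    obtain ⟨g, hg⟩ := hb_ob x hx (y1 + y2) (add_nonneg h1 h2)
    have hbound : ∀ w : F, 0 ≤ w → w ≤ y1 + y2 → -g ≤ (b x) w ∧ (b x) w ≤ g := by
      intro w hw1 hw2
      exact hg x w hx le_rfl hw1 hw2
    have hbound' : ∀ w : F, 0 ≤ w → w ≤ y2 + y1 → -g ≤ (b x) w ∧ (b x) w ≤ g := by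
      intro w hw1 hw2
      exact hbound w hw1 (by rwa [add_comm])
    have hdpf : ∀ a c : F, |a| ⊓ |c| = 0 → |(b x) a| ⊓ |(b x) c| = 0 := by
      intro a c h
      exact hb_dp₂ a c h x
    have H1 : ((b x) y1)⁺ ⊓ ((b x) y2)⁻ = 0 :=
      rdp_op hG (b x) hdpf y1 y2 h1 h2 g hbound
    have H2 : ((b x) y2)⁺ ⊓ ((b x) y1)⁻ = 0 :=
      rdp_op hG (b x) hdpf y2 y1 h2 h1 g hbound'
    rw [map_add]
    exact rdp_posPart_add H1 (by rwa [inf_comm])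
  have coneSmul1 : ∀ (c : ℝ), 0 ≤ c → ∀ (x : E) (y : F),
      (b (c • x) y)⁺ = c • (b x y)⁺ := by
    intro c hc x y
    rw [map_smul, LinearMap.smul_apply, rdp_smul_posPart hc]
  have coneSmul2 : ∀ (c : ℝ), 0 ≤ c → ∀ (x : E) (y : F),
      (b x (c • y))⁺ = c • (b x y)⁺ := by
    intro c hc x y
    rw [map_smul, rdp_smul_posPart hc]
  -- the candidate bilinear map
  refine ⟨LinearMap.mk₂ ℝ
    (fun x y => (b (x⁺) (y⁺))⁺ - (b (x⁻) (y⁺))⁺ - (b (x⁺) (y⁻))⁺ + (b (x⁻) (y⁻))⁺)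
    ?_ ?_ ?_ ?_, ?_⟩
  · -- additivity in x
    intro x1 x2 y
    have h := rdp_ext_add (V := G) (fun w => (b w (y⁺))⁺ - (b w (y⁻))⁺)
      (fun a c ha hc => by
        beta_reduce
        rw [coneAdd1 a c (y⁺) ha hc (posPart_nonneg _),
          coneAdd1 a c (y⁻) ha hc (negPart_nonneg _)]
        abel) x1 x2
    calc (b ((x1+x2)⁺) (y⁺))⁺ - (b ((x1+x2)⁻) (y⁺))⁺ - (b ((x1+x2)⁺) (y⁻))⁺ +
          (b ((x1+x2)⁻) (y⁻))⁺
        = ((b ((x1+x2)⁺) (y⁺))⁺ - (b ((x1+x2)⁺) (y⁻))⁺) -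
          ((b ((x1+x2)⁻) (y⁺))⁺ - (b ((x1+x2)⁻) (y⁻))⁺) := by abel
      _ = (((b (x1⁺) (y⁺))⁺ - (b (x1⁺) (y⁻))⁺) - ((b (x1⁻) (y⁺))⁺ - (b (x1⁻) (y⁻))⁺)) +
          (((b (x2⁺) (y⁺))⁺ - (b (x2⁺) (y⁻))⁺) - ((b (x2⁻) (y⁺))⁺ - (b (x2⁻) (y⁻))⁺)) := h
      _ = _ := by abel
  · -- scalar in x
    intro c x y
    have h := rdp_ext_smul (V := G) (fun w => (b w (y⁺))⁺ - (b w (y⁻))⁺)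
      (fun d hd a => by
        beta_reduce
        rw [coneSmul1 d hd a (y⁺), coneSmul1 d hd a (y⁻), smul_sub]) c x
    calc (b ((c • x)⁺) (y⁺))⁺ - (b ((c • x)⁻) (y⁺))⁺ - (b ((c • x)⁺) (y⁻))⁺ +
          (b ((c • x)⁻) (y⁻))⁺
        = ((b ((c • x)⁺) (y⁺))⁺ - (b ((c • x)⁺) (y⁻))⁺) -
          ((b ((c • x)⁻) (y⁺))⁺ - (b ((c • x)⁻) (y⁻))⁺) := by abel
      _ = c • (((b (x⁺) (y⁺))⁺ - (b (x⁺) (y⁻))⁺) - ((b (x⁻) (y⁺))⁺ - (b (x⁻) (y⁻))⁺)) := h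
      _ = _ := by
          rw [show ((b (x⁺) (y⁺))⁺ - (b (x⁺) (y⁻))⁺) - ((b (x⁻) (y⁺))⁺ - (b (x⁻) (y⁻))⁺) =
            (b (x⁺) (y⁺))⁺ - (b (x⁻) (y⁺))⁺ - (b (x⁺) (y⁻))⁺ + (b (x⁻) (y⁻))⁺ from by abel]
  · -- additivity in y
    intro x y1 y2
    have h := rdp_ext_add (V := G) (fun v => (b (x⁺) v)⁺ - (b (x⁻) v)⁺)
      (fun a c ha hc => by
        beta_reduce
        rw [coneAdd2 (x⁺) a c (posPart_nonneg _) ha hc,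
          coneAdd2 (x⁻) a c (negPart_nonneg _) ha hc]
        abel) y1 y2
    calc (b (x⁺) ((y1+y2)⁺))⁺ - (b (x⁻) ((y1+y2)⁺))⁺ - (b (x⁺) ((y1+y2)⁻))⁺ +
          (b (x⁻) ((y1+y2)⁻))⁺
        = ((b (x⁺) ((y1+y2)⁺))⁺ - (b (x⁻) ((y1+y2)⁺))⁺) -
          ((b (x⁺) ((y1+y2)⁻))⁺ - (b (x⁻) ((y1+y2)⁻))⁺) := by abel
      _ = (((b (x⁺) (y1⁺))⁺ - (b (x⁻) (y1⁺))⁺) - ((b (x⁺) (y1⁻))⁺ - (b (x⁻) (y1⁻))⁺)) +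
          (((b (x⁺) (y2⁺))⁺ - (b (x⁻) (y2⁺))⁺) - ((b (x⁺) (y2⁻))⁺ - (b (x⁻) (y2⁻))⁺)) := h
      _ = _ := by abel
  · -- scalar in y
    intro c x y
    have h := rdp_ext_smul (V := G) (fun v => (b (x⁺) v)⁺ - (b (x⁻) v)⁺)
      (fun d hd a => by
        beta_reduce
        rw [coneSmul2 d hd (x⁺) a, coneSmul2 d hd (x⁻) a, smul_sub]) c y
    calc (b (x⁺) ((c • y)⁺))⁺ - (b (x⁻) ((c • y)⁺))⁺ - (b (x⁺) ((c • y)⁻))⁺ +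
          (b (x⁻) ((c • y)⁻))⁺
        = ((b (x⁺) ((c • y)⁺))⁺ - (b (x⁻) ((c • y)⁺))⁺) -
          ((b (x⁺) ((c • y)⁻))⁺ - (b (x⁻) ((c • y)⁻))⁺) := by abel
      _ = c • (((b (x⁺) (y⁺))⁺ - (b (x⁻) (y⁺))⁺) - ((b (x⁺) (y⁻))⁺ - (b (x⁻) (y⁻))⁺)) := by
          rw [show ∀ A B C D : G, (A - B) - (C - D) = (A - C) - (B - D) from
            fun A B C D => by abel] at h ⊢
          exact h
      _ = _ := by
          rw [show ((b (x⁺) (y⁺))⁺ - (b (x⁻) (y⁺))⁺) - ((b (x⁺) (y⁻))⁺ - (b (x⁻) (y⁻))⁺) =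
            (b (x⁺) (y⁺))⁺ - (b (x⁻) (y⁺))⁺ - (b (x⁺) (y⁻))⁺ + (b (x⁻) (y⁻))⁺ from by abel]
  · -- characterization on the positive cones
    intro x hx y hy
    rw [LinearMap.mk₂_apply]
    rw [posPart_eq_self.mpr hx, posPart_eq_self.mpr hy,
      negPart_eq_zero.mpr hx, negPart_eq_zero.mpr hy]
    simp

end Bilinear

section Main
variable {E F G : Type*}
  [Lattice E] [AddCommGroup E] [Module ℝ E]
  [CovariantClass E E (· + ·) (· ≤ ·)] [PosSMulMono ℝ E]
  [Lattice F] [AddCommGroup F] [Module ℝ F]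
  [CovariantClass F F (· + ·) (· ≤ ·)] [PosSMulMono ℝ F]
  [Lattice G] [AddCommGroup G] [Module ℝ G]
  [CovariantClass G G (· + ·) (· ≤ ·)] [PosSMulMono ℝ G]

private lemma rdp_abs_four {a1 a2 a3 a4 : G} (h1 : 0 ≤ a1) (h2 : 0 ≤ a2) (h3 : 0 ≤ a3)
    (h4 : 0 ≤ a4) : |a1 - a2 - a3 + a4| ≤ a1 + a2 + a3 + a4 := by
  rw [abs_le']
  constructor
  · calc a1 - a2 - a3 + a4 = (a1 + a4) - (a2 + a3) := by abel
      _ ≤ a1 + a4 := sub_le_self _ (add_nonneg h2 h3)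
      _ ≤ (a1 + a4) + (a2 + a3) := le_add_of_nonneg_right (add_nonneg h2 h3)
      _ = a1 + a2 + a3 + a4 := by abel
  · calc -(a1 - a2 - a3 + a4) = (a2 + a3) - (a1 + a4) := by abel
      _ ≤ a2 + a3 := sub_le_self _ (add_nonneg h1 h4)
      _ ≤ (a2 + a3) + (a1 + a4) := le_add_of_nonneg_right (add_nonneg h1 h4)
      _ = a1 + a2 + a3 + a4 := by abel

private lemma rdp_expand (B : E →ₗ[ℝ] F →ₗ[ℝ] G) (x : E) (y : F) :
    B x y = B (x⁺) (y⁺) - B (x⁻) (y⁺) - B (x⁺) (y⁻) + B (x⁻) (y⁻) := by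
  conv_lhs => rw [← posPart_sub_negPart x, ← posPart_sub_negPart y]
  simp only [map_sub, LinearMap.sub_apply]
  abel

private lemma rdp_abs_le (B : E →ₗ[ℝ] F →ₗ[ℝ] G)
    (hpos : ∀ x : E, 0 ≤ x → ∀ y : F, 0 ≤ y → 0 ≤ B x y) (x : E) (z : F) :
    |B x z| ≤ B (|x|) (|z|) := by
  have e : B (|x|) (|z|) = B (x⁺) (z⁺) + B (x⁻) (z⁺) + B (x⁺) (z⁻) + B (x⁻) (z⁻) := by
    rw [← posPart_add_negPart x, ← posPart_add_negPart z]
    simp only [map_add, LinearMap.add_apply]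
    abel
  rw [rdp_expand B x z, e]
  exact rdp_abs_four (hpos _ (posPart_nonneg _) _ (posPart_nonneg _))
    (hpos _ (negPart_nonneg _) _ (posPart_nonneg _))
    (hpos _ (posPart_nonneg _) _ (negPart_nonneg _))
    (hpos _ (negPart_nonneg _) _ (negPart_nonneg _))

end Main

/-- Let `E`, `F`, `G` be archimedean Riesz spaces and let
`b : E × F → G` be an order bounded disjointness preserving bilinear map.
Then there exist ℓ-bimorphisms `b⁺, b⁻` with `b = b⁺ - b⁻` and, for positive
`x, y`, `b⁺(x,y) = (b(x,y))⁺` and `b⁻(x,y) = (b(x,y))⁻`. -/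
theorem riesz_decomposition_of_orderBounded_disjointnessPreserving_bilinear
    {E F G : Type*}
    [Lattice E] [AddCommGroup E] [Module ℝ E]
    [CovariantClass E E (· + ·) (· ≤ ·)] [PosSMulMono ℝ E]
    [Lattice F] [AddCommGroup F] [Module ℝ F]
    [CovariantClass F F (· + ·) (· ≤ ·)] [PosSMulMono ℝ F]
    [Lattice G] [AddCommGroup G] [Module ℝ G]
    [CovariantClass G G (· + ·) (· ≤ ·)] [PosSMulMono ℝ G]
    -- archimedean hypotheses
    (hE : ∀ x y : E, (∀ n : ℕ, n • x ≤ y) → x ≤ 0)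
    (hF : ∀ x y : F, (∀ n : ℕ, n • x ≤ y) → x ≤ 0)
    (hG : ∀ x y : G, (∀ n : ℕ, n • x ≤ y) → x ≤ 0)
    -- the bilinear map `b`
    (b : E →ₗ[ℝ] F →ₗ[ℝ] G)
    -- `b` is order bounded
    (hb_ob : ∀ x : E, 0 ≤ x → ∀ y : F, 0 ≤ y →
      ∃ g : G, ∀ (u : E) (v : F), 0 ≤ u → u ≤ x → 0 ≤ v → v ≤ y →
        -g ≤ b u v ∧ b u v ≤ g)
    -- `b` is disjointness preserving in each variable
    (hb_dp₁ : ∀ x y : E, |x| ⊓ |y| = 0 → ∀ z : F, |b x z| ⊓ |b y z| = 0)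
    (hb_dp₂ : ∀ u v : F, |u| ⊓ |v| = 0 → ∀ t : E, |b t u| ⊓ |b t v| = 0) :
    ∃ bp bm : E →ₗ[ℝ] F →ₗ[ℝ] G,
      -- `bp` is an ℓ-bimorphism
      (∀ x : E, 0 ≤ x → ∀ y : F, 0 ≤ y → 0 ≤ bp x y) ∧
      (∀ x y : E, |x| ⊓ |y| = 0 → ∀ z : F, |bp x z| ⊓ |bp y z| = 0) ∧
      (∀ u v : F, |u| ⊓ |v| = 0 → ∀ t : E, |bp t u| ⊓ |bp t v| = 0) ∧
      -- `bm` is an ℓ-bimorphism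
      (∀ x : E, 0 ≤ x → ∀ y : F, 0 ≤ y → 0 ≤ bm x y) ∧
      (∀ x y : E, |x| ⊓ |y| = 0 → ∀ z : F, |bm x z| ⊓ |bm y z| = 0) ∧
      (∀ u v : F, |u| ⊓ |v| = 0 → ∀ t : E, |bm t u| ⊓ |bm t v| = 0) ∧
      -- `b = bp - bm`
      (∀ (x : E) (y : F), b x y = bp x y - bm x y) ∧
      -- positive/negative parts on positive elements
      (∀ x : E, 0 ≤ x → ∀ y : F, 0 ≤ y →
        bp x y = b x y ⊔ 0 ∧ bm x y = -(b x y) ⊔ 0) := by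
  obtain ⟨bp, hbp⟩ := rdp_exists_posPart hG b hb_ob hb_dp₁ hb_dp₂
  -- hypotheses for `-b`
  have hb_obN : ∀ x : E, 0 ≤ x → ∀ y : F, 0 ≤ y →
      ∃ g : G, ∀ (u : E) (v : F), 0 ≤ u → u ≤ x → 0 ≤ v → v ≤ y →
        -g ≤ (-b) u v ∧ (-b) u v ≤ g := by
    intro x hx y hy
    obtain ⟨g, hg⟩ := hb_ob x hx y hy
    refine ⟨g, fun u v h1 h2 h3 h4 => ?_⟩
    obtain ⟨l, r⟩ := hg u v h1 h2 h3 h4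
    constructor
    · simpa [LinearMap.neg_apply] using neg_le_neg_iff.mpr r
    · simpa [LinearMap.neg_apply] using neg_le_neg_iff.mpr l
  have hb_dp₁N : ∀ x y : E, |x| ⊓ |y| = 0 → ∀ z : F, |(-b) x z| ⊓ |(-b) y z| = 0 := by
    intro x y h z
    simpa [LinearMap.neg_apply, abs_neg] using hb_dp₁ x y h z
  have hb_dp₂N : ∀ u v : F, |u| ⊓ |v| = 0 → ∀ t : E, |(-b) t u| ⊓ |(-b) t v| = 0 := by
    intro u v h t
    simpa [LinearMap.neg_apply, abs_neg] using hb_dp₂ u v h t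
  obtain ⟨bm, hbm⟩ := rdp_exists_posPart hG (-b) hb_obN hb_dp₁N hb_dp₂N
  have cbm : ∀ x : E, 0 ≤ x → ∀ y : F, 0 ≤ y → bm x y = (-(b x y))⁺ := by
    intro x hx y hy
    rw [hbm x hx y hy]
    simp [LinearMap.neg_apply]
  -- positivity
  have pos_bp : ∀ x : E, 0 ≤ x → ∀ y : F, 0 ≤ y → 0 ≤ bp x y := by
    intro x hx y hy
    rw [hbp x hx y hy]
    exact posPart_nonneg _
  have pos_bm : ∀ x : E, 0 ≤ x → ∀ y : F, 0 ≤ y → 0 ≤ bm x y := by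
    intro x hx y hy
    rw [cbm x hx y hy]
    exact posPart_nonneg _
  -- disjointness preservation for bp
  have dp1_bp : ∀ x y : E, |x| ⊓ |y| = 0 → ∀ z : F, |bp x z| ⊓ |bp y z| = 0 := by
    intro x y hxy z
    have key : bp (|x|) (|z|) ⊓ bp (|y|) (|z|) = 0 := by
      rw [hbp (|x|) (abs_nonneg x) (|z|) (abs_nonneg z), hbp (|y|) (abs_nonneg y) (|z|) (abs_nonneg z)]
      refine le_antisymm ?_ (le_inf (posPart_nonneg _) (posPart_nonneg _))
      calc (b (|x|) (|z|))⁺ ⊓ (b (|y|) (|z|))⁺ ≤ |b (|x|) (|z|)| ⊓ |b (|y|) (|z|)| :=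
            inf_le_inf (rdp_posPart_le_abs _) (rdp_posPart_le_abs _)
        _ = 0 := hb_dp₁ (|x|) (|y|) (by rwa [abs_abs, abs_abs]) (|z|)
    refine le_antisymm ?_ (le_inf (abs_nonneg _) (abs_nonneg _))
    calc |bp x z| ⊓ |bp y z| ≤ bp (|x|) (|z|) ⊓ bp (|y|) (|z|) :=
          inf_le_inf (rdp_abs_le bp pos_bp x z) (rdp_abs_le bp pos_bp y z)
      _ = 0 := key
  have dp2_bp : ∀ u v : F, |u| ⊓ |v| = 0 → ∀ t : E, |bp t u| ⊓ |bp t v| = 0 := by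
    intro u v huv t
    have key : bp (|t|) (|u|) ⊓ bp (|t|) (|v|) = 0 := by
      rw [hbp (|t|) (abs_nonneg t) (|u|) (abs_nonneg u), hbp (|t|) (abs_nonneg t) (|v|) (abs_nonneg v)]
      refine le_antisymm ?_ (le_inf (posPart_nonneg _) (posPart_nonneg _))
      calc (b (|t|) (|u|))⁺ ⊓ (b (|t|) (|v|))⁺ ≤ |b (|t|) (|u|)| ⊓ |b (|t|) (|v|)| :=
            inf_le_inf (rdp_posPart_le_abs _) (rdp_posPart_le_abs _)
        _ = 0 := hb_dp₂ (|u|) (|v|) (by rwa [abs_abs, abs_abs]) (|t|)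
    refine le_antisymm ?_ (le_inf (abs_nonneg _) (abs_nonneg _))
    calc |bp t u| ⊓ |bp t v| ≤ bp (|t|) (|u|) ⊓ bp (|t|) (|v|) :=
          inf_le_inf (rdp_abs_le bp pos_bp t u) (rdp_abs_le bp pos_bp t v)
      _ = 0 := key
  have dp1_bm : ∀ x y : E, |x| ⊓ |y| = 0 → ∀ z : F, |bm x z| ⊓ |bm y z| = 0 := by
    intro x y hxy z
    have key : bm (|x|) (|z|) ⊓ bm (|y|) (|z|) = 0 := by
      rw [hbm (|x|) (abs_nonneg x) (|z|) (abs_nonneg z), hbm (|y|) (abs_nonneg y) (|z|) (abs_nonneg z)]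
      refine le_antisymm ?_ (le_inf (posPart_nonneg _) (posPart_nonneg _))
      calc ((-b) (|x|) (|z|))⁺ ⊓ ((-b) (|y|) (|z|))⁺ ≤ |(-b) (|x|) (|z|)| ⊓ |(-b) (|y|) (|z|)| :=
            inf_le_inf (rdp_posPart_le_abs _) (rdp_posPart_le_abs _)
        _ = 0 := hb_dp₁N (|x|) (|y|) (by rwa [abs_abs, abs_abs]) (|z|)
    refine le_antisymm ?_ (le_inf (abs_nonneg _) (abs_nonneg _))
    calc |bm x z| ⊓ |bm y z| ≤ bm (|x|) (|z|) ⊓ bm (|y|) (|z|) :=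
          inf_le_inf (rdp_abs_le bm pos_bm x z) (rdp_abs_le bm pos_bm y z)
      _ = 0 := key
  have dp2_bm : ∀ u v : F, |u| ⊓ |v| = 0 → ∀ t : E, |bm t u| ⊓ |bm t v| = 0 := by
    intro u v huv t
    have key : bm (|t|) (|u|) ⊓ bm (|t|) (|v|) = 0 := by
      rw [hbm (|t|) (abs_nonneg t) (|u|) (abs_nonneg u), hbm (|t|) (abs_nonneg t) (|v|) (abs_nonneg v)]
      refine le_antisymm ?_ (le_inf (posPart_nonneg _) (posPart_nonneg _))
      calc ((-b) (|t|) (|u|))⁺ ⊓ ((-b) (|t|) (|v|))⁺ ≤ |(-b) (|t|) (|u|)| ⊓ |(-b) (|t|) (|v|)| :=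
            inf_le_inf (rdp_posPart_le_abs _) (rdp_posPart_le_abs _)
        _ = 0 := hb_dp₂N (|u|) (|v|) (by rwa [abs_abs, abs_abs]) (|t|)
    refine le_antisymm ?_ (le_inf (abs_nonneg _) (abs_nonneg _))
    calc |bm t u| ⊓ |bm t v| ≤ bm (|t|) (|u|) ⊓ bm (|t|) (|v|) :=
          inf_le_inf (rdp_abs_le bm pos_bm t u) (rdp_abs_le bm pos_bm t v)
      _ = 0 := key
  -- decomposition
  have cone_eq : ∀ x : E, 0 ≤ x → ∀ y : F, 0 ≤ y → b x y = bp x y - bm x y := by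
    intro x hx y hy
    rw [hbp x hx y hy, cbm x hx y hy]
    have : (-(b x y))⁺ = (b x y)⁻ := posPart_neg _
    rw [this, posPart_sub_negPart]
  have decomp : ∀ (x : E) (y : F), b x y = bp x y - bm x y := by
    intro x y
    calc b x y = b (x⁺) (y⁺) - b (x⁻) (y⁺) - b (x⁺) (y⁻) + b (x⁻) (y⁻) := rdp_expand b x y
      _ = (bp (x⁺) (y⁺) - bm (x⁺) (y⁺)) - (bp (x⁻) (y⁺) - bm (x⁻) (y⁺)) -
          (bp (x⁺) (y⁻) - bm (x⁺) (y⁻)) + (bp (x⁻) (y⁻) - bm (x⁻) (y⁻)) := by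
          rw [cone_eq _ (posPart_nonneg _) _ (posPart_nonneg _),
            cone_eq _ (negPart_nonneg _) _ (posPart_nonneg _),
            cone_eq _ (posPart_nonneg _) _ (negPart_nonneg _),
            cone_eq _ (negPart_nonneg _) _ (negPart_nonneg _)]
      _ = (bp (x⁺) (y⁺) - bp (x⁻) (y⁺) - bp (x⁺) (y⁻) + bp (x⁻) (y⁻)) -
          (bm (x⁺) (y⁺) - bm (x⁻) (y⁺) - bm (x⁺) (y⁻) + bm (x⁻) (y⁻)) := by abel
      _ = bp x y - bm x y := by rw [← rdp_expand bp x y, ← rdp_expand bm x y]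
  refine ⟨bp, bm, pos_bp, dp1_bp, dp2_bp, pos_bm, dp1_bm, dp2_bm, decomp, ?_⟩
  intro x hx y hy
  constructor
  · rw [hbp x hx y hy, posPart_def]
  · rw [cbm x hx y hy, posPart_def]
end

section
/- Let $E$, $F$ and $G$ be archimedean Riesz spaces, let $S : E \to E$ and $T : F \to F$ be order bounded disjointness preserving linear operators, and let $b : E \times F \to G$ be an $\ell$-bimorphism. Suppose $S^{+}, S^{-} : E \to E$ are lattice homomorphisms with $S = S^{+} - S^{-}$ and $(S^{+} + S^{-})(x) = |S x|$ for all $x \in E^{+}$, and similarly $T^{+}, T^{-} : F \to F$ are lattice homomorphisms with $T = T^{+} - T^{-}$ and $(T^{+} + T^{-})(y) = |T y|$ for all $y \in F^{+}$. Then the bilinear maps $\mathfrak{b}_{p}(x,y) = b(S^{+}(x), T^{+}(y)) + b(S^{-}(x), T^{-}(y))$ and $\mathfrak{b}_{m}(x,y) = b(S^{+}(x), T^{-}(y)) + b(S^{-}(x), T^{+}(y))$ are $\ell$-bimorphisms, and $\mathfrak{b}_{p} - \mathfrak{b}_{m} = \mathfrak{b}$ where $\mathfrak{b}(x,y) = b(S(x),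 T(y))$. -/
section Aux

variable {G : Type*} [Lattice G] [AddCommGroup G] [CovariantClass G G (· + ·) (· ≤ ·)]

lemma my_abs_add (a b : G) : |a + b| ≤ |a| + |b| :=
  abs_le'.2 ⟨add_le_add (le_abs_self a) (le_abs_self b), by
    rw [neg_add]
    exact add_le_add (neg_le_abs a) (neg_le_abs b)⟩

lemma my_inf_add_le (a b c : G) (ha : 0 ≤ a) (hb : 0 ≤ b) (hc : 0 ≤ c) :
    a ⊓ (b + c) ≤ a ⊓ b + a ⊓ c := by
  set d := a ⊓ (b + c) with hd
  have h1 : d - a ⊓ c = (d - a) ⊔ (d - c) := sub_inf a c d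
  have h2 : d - a ≤ a ⊓ b := le_trans (sub_nonpos.2 inf_le_left) (le_inf ha hb)
  have h3 : d - c ≤ a ⊓ b := by
    refine le_inf ?_ ?_
    · calc d - c ≤ a - c := sub_le_sub_right inf_le_left c
        _ ≤ a := sub_le_self a hc
    · exact sub_le_iff_le_add.2 (le_trans inf_le_right (by rw [add_comm]))
  have h4 : d - a ⊓ c ≤ a ⊓ b := by rw [h1]; exact sup_le h2 h3
  have h5 := sub_le_iff_le_add.1 h4
  exact h5

lemma my_disj_sum (A B C D : G) (hAC : |A| ⊓ |C| = 0) (hAD : |A| ⊓ |D| = 0)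
    (hBC : |B| ⊓ |C| = 0) (hBD : |B| ⊓ |D| = 0) :
    |A + B| ⊓ |C + D| = 0 := by
  have habs : ∀ x : G, (0:G) ≤ |x| := abs_nonneg
  refine le_antisymm ?_ (le_inf (habs _) (habs _))
  calc |A + B| ⊓ |C + D| ≤ (|A| + |B|) ⊓ (|C| + |D|) :=
        inf_le_inf (my_abs_add A B) (my_abs_add C D)
    _ ≤ (|A| + |B|) ⊓ |C| + (|A| + |B|) ⊓ |D| :=
        my_inf_add_le _ _ _ (by positivity) (habs _) (habs _)
    _ ≤ (|C| ⊓ |A| + |C| ⊓ |B|) + (|D| ⊓ |A| + |D| ⊓ |B|) := by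
        refine add_le_add ?_ ?_
        · rw [inf_comm]; exact my_inf_add_le _ _ _ (habs _) (habs _) (habs _)
        · rw [inf_comm]; exact my_inf_add_le _ _ _ (habs _) (habs _) (habs _)
    _ = 0 := by rw [inf_comm |C| |A|, inf_comm |C| |B|, inf_comm |D| |A|, inf_comm |D| |B|,
          hAC, hBC, hAD, hBD]; simp

end Aux

/-- With `S = S⁺ - S⁻`, `T = T⁺ - T⁻` decompositions into lattice
homomorphisms as in the statement, the maps
`𝔟ₚ(x,y) = b(S⁺x, T⁺y) + b(S⁻x, T⁻y)` and `𝔟ₘ(x,y) = b(S⁺x, T⁻y) + b(S⁻x, T⁺y)`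
are ℓ-bimorphisms with `𝔟ₚ - 𝔟ₘ = 𝔟` where `𝔟(x,y) = b(Sx, Ty)`. -/
theorem bimorphism_parts_of_composite
    {E F G : Type*}
    [Lattice E] [AddCommGroup E] [Module ℝ E]
    [CovariantClass E E (· + ·) (· ≤ ·)] [PosSMulMono ℝ E]
    [Lattice F] [AddCommGroup F] [Module ℝ F]
    [CovariantClass F F (· + ·) (· ≤ ·)] [PosSMulMono ℝ F]
    [Lattice G] [AddCommGroup G] [Module ℝ G]
    [CovariantClass G G (· + ·) (· ≤ ·)] [PosSMulMono ℝ G]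
    -- archimedean hypotheses
    (hE : ∀ x y : E, (∀ n : ℕ, n • x ≤ y) → x ≤ 0)
    (hF : ∀ x y : F, (∀ n : ℕ, n • x ≤ y) → x ≤ 0)
    (hG : ∀ x y : G, (∀ n : ℕ, n • x ≤ y) → x ≤ 0)
    -- `S` is an order bounded disjointness preserving operator on `E`
    (S : E →ₗ[ℝ] E)
    (hS_ob : ∀ a c : E, ∃ l u : E, ∀ x : E, a ≤ x → x ≤ c → l ≤ S x ∧ S x ≤ u)
    (hS_dp : ∀ x y : E, |x| ⊓ |y| = 0 → |S x| ⊓ |S y| = 0)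
    -- `T` is an order bounded disjointness preserving operator on `F`
    (T : F →ₗ[ℝ] F)
    (hT_ob : ∀ a c : F, ∃ l u : F, ∀ y : F, a ≤ y → y ≤ c → l ≤ T y ∧ T y ≤ u)
    (hT_dp : ∀ x y : F, |x| ⊓ |y| = 0 → |T x| ⊓ |T y| = 0)
    -- lattice homomorphism decomposition of `S`
    (Sp Sm : E →ₗ[ℝ] E)
    (hSp_lat : ∀ x y : E, Sp (x ⊔ y) = Sp x ⊔ Sp y)
    (hSm_lat : ∀ x y : E, Sm (x ⊔ y) = Sm x ⊔ Sm y)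
    (hS_decomp : ∀ x : E, S x = Sp x - Sm x)
    (hS_abs : ∀ x : E, 0 ≤ x → Sp x + Sm x = |S x|)
    -- lattice homomorphism decomposition of `T`
    (Tp Tm : F →ₗ[ℝ] F)
    (hTp_lat : ∀ x y : F, Tp (x ⊔ y) = Tp x ⊔ Tp y)
    (hTm_lat : ∀ x y : F, Tm (x ⊔ y) = Tm x ⊔ Tm y)
    (hT_decomp : ∀ y : F, T y = Tp y - Tm y)
    (hT_abs : ∀ y : F, 0 ≤ y → Tp y + Tm y = |T y|)
    -- `b` is an ℓ-bimorphism
    (b : E →ₗ[ℝ] F →ₗ[ℝ] G)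
    (hb_pos : ∀ x : E, 0 ≤ x → ∀ y : F, 0 ≤ y → 0 ≤ b x y)
    (hb_dp₁ : ∀ x y : E, |x| ⊓ |y| = 0 → ∀ z : F, |b x z| ⊓ |b y z| = 0)
    (hb_dp₂ : ∀ u v : F, |u| ⊓ |v| = 0 → ∀ t : E, |b t u| ⊓ |b t v| = 0) :
    -- `𝔟ₚ(x,y) = b(S⁺x, T⁺y) + b(S⁻x, T⁻y)` is an ℓ-bimorphism
    (∀ x : E, 0 ≤ x → ∀ y : F, 0 ≤ y →
      0 ≤ b (Sp x) (Tp y) + b (Sm x) (Tm y)) ∧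
    (∀ x y : E, |x| ⊓ |y| = 0 → ∀ z : F,
      |b (Sp x) (Tp z) + b (Sm x) (Tm z)| ⊓ |b (Sp y) (Tp z) + b (Sm y) (Tm z)| = 0) ∧
    (∀ u v : F, |u| ⊓ |v| = 0 → ∀ t : E,
      |b (Sp t) (Tp u) + b (Sm t) (Tm u)| ⊓ |b (Sp t) (Tp v) + b (Sm t) (Tm v)| = 0) ∧
    -- `𝔟ₘ(x,y) = b(S⁺x, T⁻y) + b(S⁻x, T⁺y)` is an ℓ-bimorphism
    (∀ x : E, 0 ≤ x → ∀ y : F, 0 ≤ y →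
      0 ≤ b (Sp x) (Tm y) + b (Sm x) (Tp y)) ∧
    (∀ x y : E, |x| ⊓ |y| = 0 → ∀ z : F,
      |b (Sp x) (Tm z) + b (Sm x) (Tp z)| ⊓ |b (Sp y) (Tm z) + b (Sm y) (Tp z)| = 0) ∧
    (∀ u v : F, |u| ⊓ |v| = 0 → ∀ t : E,
      |b (Sp t) (Tm u) + b (Sm t) (Tp u)| ⊓ |b (Sp t) (Tm v) + b (Sm t) (Tp v)| = 0) ∧
    -- `𝔟ₚ - 𝔟ₘ = 𝔟`
    (∀ (x : E) (y : F),
      (b (Sp x) (Tp y) + b (Sm x) (Tm y)) - (b (Sp x) (Tm y) + b (Sm x) (Tp y))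
        = b (S x) (T y)) := by
  -- monotonicity of lattice homomorphisms
  have mono : ∀ (P : E →ₗ[ℝ] E), (∀ x y : E, P (x ⊔ y) = P x ⊔ P y) →
      ∀ x y : E, x ≤ y → P x ≤ P y := by
    intro P hP x y hxy
    have : P y = P x ⊔ P y := by rw [← hP, sup_eq_right.2 hxy]
    rw [this]; exact le_sup_left
  have monoF : ∀ (P : F →ₗ[ℝ] F), (∀ x y : F, P (x ⊔ y) = P x ⊔ P y) →
      ∀ x y : F, x ≤ y → P x ≤ P y := by
    intro P hP x y hxy
    have : P y = P x ⊔ P y := by rw [← hP, sup_eq_right.2 hxy]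
    rw [this]; exact le_sup_left
  -- positivity
  have hSp_pos : ∀ x : E, 0 ≤ x → 0 ≤ Sp x := fun x hx => by
    simpa using mono Sp hSp_lat 0 x hx
  have hSm_pos : ∀ x : E, 0 ≤ x → 0 ≤ Sm x := fun x hx => by
    simpa using mono Sm hSm_lat 0 x hx
  have hTp_pos : ∀ y : F, 0 ≤ y → 0 ≤ Tp y := fun y hy => by
    simpa using monoF Tp hTp_lat 0 y hy
  have hTm_pos : ∀ y : F, 0 ≤ y → 0 ≤ Tm y := fun y hy => by
    simpa using monoF Tm hTm_lat 0 y hy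
  -- |P x| ≤ |S (|x|)| for P in {Sp, Sm}
  have habsE : ∀ (P : E →ₗ[ℝ] E), (∀ x y : E, P (x ⊔ y) = P x ⊔ P y) →
      (∀ x : E, 0 ≤ x → P x ≤ |S x|) →
      ∀ x : E, |P x| ≤ |S (|x|)| := by
    intro P hP hle x
    have h1 : P x ≤ P |x| := mono P hP x |x| (le_abs_self x)
    have h2 : -(P x) ≤ P |x| := by
      have := mono P hP (-x) |x| (neg_le_abs x)
      rwa [map_neg] at this
    have h3 : P |x| ≤ |S (|x|)| := hle |x| (abs_nonneg x)
    exact abs_le'.2 ⟨h1.trans h3, h2.trans h3⟩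
  have hSp_abs : ∀ x : E, |Sp x| ≤ |S (|x|)| :=
    habsE Sp hSp_lat fun x hx => (hS_abs x hx) ▸ le_add_of_nonneg_right (hSm_pos x hx)
  have hSm_abs : ∀ x : E, |Sm x| ≤ |S (|x|)| :=
    habsE Sm hSm_lat fun x hx => (hS_abs x hx) ▸ le_add_of_nonneg_left (hSp_pos x hx)
  have habsF : ∀ (P : F →ₗ[ℝ] F), (∀ x y : F, P (x ⊔ y) = P x ⊔ P y) →
      (∀ x : F, 0 ≤ x → P x ≤ |T x|) →
      ∀ x : F, |P x| ≤ |T (|x|)| := by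
    intro P hP hle x
    have h1 : P x ≤ P |x| := monoF P hP x |x| (le_abs_self x)
    have h2 : -(P x) ≤ P |x| := by
      have := monoF P hP (-x) |x| (neg_le_abs x)
      rwa [map_neg] at this
    have h3 : P |x| ≤ |T (|x|)| := hle |x| (abs_nonneg x)
    exact abs_le'.2 ⟨h1.trans h3, h2.trans h3⟩
  have hTp_abs : ∀ y : F, |Tp y| ≤ |T (|y|)| :=
    habsF Tp hTp_lat fun y hy => (hT_abs y hy) ▸ le_add_of_nonneg_right (hTm_pos y hy)
  have hTm_abs : ∀ y : F, |Tm y| ≤ |T (|y|)| :=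
    habsF Tm hTm_lat fun y hy => (hT_abs y hy) ▸ le_add_of_nonneg_left (hTp_pos y hy)
  -- pairwise disjointness of images under Sp/Sm
  have hcrossE : ∀ x y : E, |x| ⊓ |y| = 0 →
      ∀ (P Q : E →ₗ[ℝ] E), (∀ t : E, |P t| ≤ |S (|t|)|) → (∀ t : E, |Q t| ≤ |S (|t|)|) →
      |P x| ⊓ |Q y| = 0 := by
    intro x y hxy P Q hP hQ
    have h0 : |S (|x|)| ⊓ |S (|y|)| = 0 := hS_dp |x| |y| (by simpa using hxy)
    refine le_antisymm ?_ (le_inf (abs_nonneg _) (abs_nonneg _))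
    calc |P x| ⊓ |Q y| ≤ |S (|x|)| ⊓ |S (|y|)| := inf_le_inf (hP x) (hQ y)
      _ = 0 := h0
  have hcrossF : ∀ x y : F, |x| ⊓ |y| = 0 →
      ∀ (P Q : F →ₗ[ℝ] F), (∀ t : F, |P t| ≤ |T (|t|)|) → (∀ t : F, |Q t| ≤ |T (|t|)|) →
      |P x| ⊓ |Q y| = 0 := by
    intro x y hxy P Q hP hQ
    have h0 : |T (|x|)| ⊓ |T (|y|)| = 0 := hT_dp |x| |y| (by simpa using hxy)
    refine le_antisymm ?_ (le_inf (abs_nonneg _) (abs_nonneg _))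
    calc |P x| ⊓ |Q y| ≤ |T (|x|)| ⊓ |T (|y|)| := inf_le_inf (hP x) (hQ y)
      _ = 0 := h0
  -- monotonicity of b in each argument
  have hb_mono₂ : ∀ t : E, 0 ≤ t → ∀ v w : F, v ≤ w → b t v ≤ b t w := by
    intro t ht v w hvw
    have h := hb_pos t ht (w - v) (sub_nonneg.2 hvw)
    rw [map_sub] at h
    exact sub_nonneg.1 h
  have hb_mono₁ : ∀ v : F, 0 ≤ v → ∀ t s : E, t ≤ s → b t v ≤ b s v := by
    intro v hv t s hts
    have h := hb_pos (s - t) (sub_nonneg.2 hts) v hv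
    rw [map_sub, LinearMap.sub_apply] at h
    exact sub_nonneg.1 h
  -- |b u v| ≤ b |u| |v|
  have hb_abs : ∀ (u : E) (v : F), |b u v| ≤ b |u| |v| := by
    intro u v
    have hA : 0 ≤ b (u⁺) (v⁺) := hb_pos _ (posPart_nonneg u) _ (posPart_nonneg v)
    have hB : 0 ≤ b (u⁺) (v⁻) := hb_pos _ (posPart_nonneg u) _ (negPart_nonneg v)
    have hC : 0 ≤ b (u⁻) (v⁺) := hb_pos _ (negPart_nonneg u) _ (posPart_nonneg v)
    have hD : 0 ≤ b (u⁻) (v⁻) := hb_pos _ (negPart_nonneg u) _ (negPart_nonneg v)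
    have e0 : b (u⁺ - u⁻) (v⁺ - v⁻)
        = (b (u⁺) (v⁺) + b (u⁻) (v⁻)) - (b (u⁺) (v⁻) + b (u⁻) (v⁺)) := by
      simp only [map_sub, LinearMap.sub_apply]; abel
    have e0' : b u v = (b (u⁺) (v⁺) + b (u⁻) (v⁻)) - (b (u⁺) (v⁻) + b (u⁻) (v⁺)) := by
      rw [← e0, posPart_sub_negPart, posPart_sub_negPart]
    have e1 : b (u⁺ + u⁻) (v⁺ + v⁻)
        = (b (u⁺) (v⁺) + b (u⁻) (v⁻)) + (b (u⁺) (v⁻) + b (u⁻) (v⁺)) := by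
      simp only [map_add, LinearMap.add_apply]; abel
    have etot : b |u| |v| = (b (u⁺) (v⁺) + b (u⁻) (v⁻)) + (b (u⁺) (v⁻) + b (u⁻) (v⁺)) := by
      rw [← posPart_add_negPart u, ← posPart_add_negPart v]; exact e1
    refine abs_le'.2 ⟨?_, ?_⟩
    · rw [e0', etot]
      exact (sub_le_self _ (add_nonneg hB hC)).trans (le_add_of_nonneg_right (add_nonneg hB hC))
    · rw [e0', etot, neg_sub]
      exact (sub_le_self _ (add_nonneg hA hD)).trans (le_add_of_nonneg_left (add_nonneg hA hD))
  -- key disjointness lemmas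
  have key₁ : ∀ x y : E, |x| ⊓ |y| = 0 → ∀ z₁ z₂ : F, ∀ (P Q : E →ₗ[ℝ] E),
      (∀ t : E, |P t| ≤ |S (|t|)|) → (∀ t : E, |Q t| ≤ |S (|t|)|) →
      |b (P x) z₁| ⊓ |b (Q y) z₂| = 0 := by
    intro x y hxy z₁ z₂ P Q hP hQ
    have hPQ : |P x| ⊓ |Q y| = 0 := hcrossE x y hxy P Q hP hQ
    have hd := hb_dp₁ (|P x|) (|Q y|) (by simpa [abs_abs] using hPQ) (|z₁| ⊔ |z₂|)
    have h1 : |b (P x) z₁| ≤ |b (|P x|) (|z₁| ⊔ |z₂|)| :=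
      ((hb_abs _ _).trans (hb_mono₂ (|P x|) (abs_nonneg _) _ _ le_sup_left)).trans
        (le_abs_self _)
    have h2 : |b (Q y) z₂| ≤ |b (|Q y|) (|z₁| ⊔ |z₂|)| :=
      ((hb_abs _ _).trans (hb_mono₂ (|Q y|) (abs_nonneg _) _ _ le_sup_right)).trans
        (le_abs_self _)
    exact le_antisymm ((inf_le_inf h1 h2).trans hd.le)
      (le_inf (abs_nonneg _) (abs_nonneg _))
  have key₂ : ∀ u v : F, |u| ⊓ |v| = 0 → ∀ t₁ t₂ : E, ∀ (P Q : F →ₗ[ℝ] F),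
      (∀ t : F, |P t| ≤ |T (|t|)|) → (∀ t : F, |Q t| ≤ |T (|t|)|) →
      |b t₁ (P u)| ⊓ |b t₂ (Q v)| = 0 := by
    intro u v huv t₁ t₂ P Q hP hQ
    have hPQ : |P u| ⊓ |Q v| = 0 := hcrossF u v huv P Q hP hQ
    have hd := hb_dp₂ (|P u|) (|Q v|) (by simpa [abs_abs] using hPQ) (|t₁| ⊔ |t₂|)
    have h1 : |b t₁ (P u)| ≤ |b (|t₁| ⊔ |t₂|) (|P u|)| :=
      ((hb_abs _ _).trans (hb_mono₁ (|P u|) (abs_nonneg _) _ _ le_sup_left)).trans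
        (le_abs_self _)
    have h2 : |b t₂ (Q v)| ≤ |b (|t₁| ⊔ |t₂|) (|Q v|)| :=
      ((hb_abs _ _).trans (hb_mono₁ (|Q v|) (abs_nonneg _) _ _ le_sup_right)).trans
        (le_abs_self _)
    exact le_antisymm ((inf_le_inf h1 h2).trans hd.le)
      (le_inf (abs_nonneg _) (abs_nonneg _))
  refine ⟨?_, ?_, ?_, ?_, ?_, ?_, ?_⟩
  · intro x hx y hy
    exact add_nonneg (hb_pos _ (hSp_pos x hx) _ (hTp_pos y hy))
      (hb_pos _ (hSm_pos x hx) _ (hTm_pos y hy))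
  · intro x y hxy z
    exact my_disj_sum _ _ _ _
      (key₁ x y hxy (Tp z) (Tp z) Sp Sp hSp_abs hSp_abs)
      (key₁ x y hxy (Tp z) (Tm z) Sp Sm hSp_abs hSm_abs)
      (key₁ x y hxy (Tm z) (Tp z) Sm Sp hSm_abs hSp_abs)
      (key₁ x y hxy (Tm z) (Tm z) Sm Sm hSm_abs hSm_abs)
  · intro u v huv t
    exact my_disj_sum _ _ _ _
      (key₂ u v huv (Sp t) (Sp t) Tp Tp hTp_abs hTp_abs)
      (key₂ u v huv (Sp t) (Sm t) Tp Tm hTp_abs hTm_abs)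
      (key₂ u v huv (Sm t) (Sp t) Tm Tp hTm_abs hTp_abs)
      (key₂ u v huv (Sm t) (Sm t) Tm Tm hTm_abs hTm_abs)
  · intro x hx y hy
    exact add_nonneg (hb_pos _ (hSp_pos x hx) _ (hTm_pos y hy))
      (hb_pos _ (hSm_pos x hx) _ (hTp_pos y hy))
  · intro x y hxy z
    exact my_disj_sum _ _ _ _
      (key₁ x y hxy (Tm z) (Tm z) Sp Sp hSp_abs hSp_abs)
      (key₁ x y hxy (Tm z) (Tp z) Sp Sm hSp_abs hSm_abs)
      (key₁ x y hxy (Tp z) (Tm z) Sm Sp hSm_abs hSp_abs)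
      (key₁ x y hxy (Tp z) (Tp z) Sm Sm hSm_abs hSm_abs)
  · intro u v huv t
    exact my_disj_sum _ _ _ _
      (key₂ u v huv (Sp t) (Sp t) Tm Tm hTm_abs hTm_abs)
      (key₂ u v huv (Sp t) (Sm t) Tm Tp hTm_abs hTp_abs)
      (key₂ u v huv (Sm t) (Sp t) Tp Tm hTp_abs hTm_abs)
      (key₂ u v huv (Sm t) (Sm t) Tp Tp hTp_abs hTp_abs)
  · intro x y
    rw [hS_decomp x, hT_decomp y]
    simp only [map_sub, LinearMap.sub_apply]
    abel
end

section
/- Let $E$, $F$ and $G$ be archimedean Riesz spaces, let $S : E \to E$ and $T : F \to F$ be order bounded disjointness preserving linear operators, and let $b : E \times F \to G$ be an $\ell$-bimorphism. Suppose $S^{+}, S^{-} : E \to E$ are lattice homomorphisms with $S = S^{+} - S^{-}$ and $(S^{+} + S^{-})(x) = |S x|$ for all $x \in E^{+}$, and similarly $T^{+}, T^{-} : F \to F$ are lattice homomorphisms with $T = T^{+} - T^{-}$ and $(T^{+} + T^{-})(y) = |T y|$ for all $y \in F^{+}$. Then for all $x \in E^{+}$ and $y \in F^{+}$ one has $\big(b(S^{+}(x),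 T^{+}(y)) + b(S^{-}(x), T^{-}(y))\big) \wedge \big(b(S^{+}(x), T^{-}(y)) + b(S^{-}(x), T^{+}(y))\big) = 0$, and consequently $b(S^{+}(x), T^{+}(y)) + b(S^{-}(x), T^{-}(y)) = \big(b(S(x), T(y))\big)^{+}$ and $b(S^{+}(x), T^{-}(y)) + b(S^{-}(x), T^{+}(y)) = \big(b(S(x), T(y))\big)^{-}$. -/
section Aux
variable {A : Type*} [Lattice A] [AddCommGroup A] [Module ℝ A]
  [CovariantClass A A (· + ·) (· ≤ ·)]

lemma aux_inf_zero (p q : A) (h : p + q = |p - q|) : p ⊓ q = 0 := by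
  have h1 : (p ⊓ q) + (p ⊔ q) = p + q := inf_add_sup p q
  have h2 : (p ⊔ q) - (p ⊓ q) = |q - p| := sup_sub_inf_eq_abs_sub p q
  rw [abs_sub_comm, ← h] at h2
  have h3 : (p ⊓ q) + (p ⊓ q) = 0 := by
    have e : (p ⊓ q) + (p ⊓ q) = ((p ⊓ q) + (p ⊔ q)) - ((p ⊔ q) - (p ⊓ q)) := by abel
    rw [e, h1, h2, sub_self]
  have : (2 : ℝ) • (p ⊓ q) = 0 := by rw [two_smul]; exact h3
  have := congrArg (fun z => (2 : ℝ)⁻¹ • z) this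
  simpa [smul_smul] using this

lemma aux_add_inf_zero {u v w : A} (hu : 0 ≤ u) (hv : 0 ≤ v) (hw : 0 ≤ w)
    (h1 : u ⊓ w = 0) (h2 : v ⊓ w = 0) : (u + v) ⊓ w = 0 := by
  have key : (u + v) ⊓ w ≤ (u ⊓ w) + (v ⊓ w) := by
    have h3 : (u ⊓ w) + (v ⊓ w) = ((u + v) ⊓ (u + w)) ⊓ ((w + v) ⊓ (w + w)) := by
      rw [inf_add, add_inf, add_inf]
    rw [h3]
    refine le_inf (le_inf inf_le_left ?_) (le_inf ?_ ?_)
    · exact inf_le_right.trans (le_add_of_nonneg_left hu)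
    · exact inf_le_right.trans (le_add_of_nonneg_right hv)
    · exact inf_le_right.trans (le_add_of_nonneg_left hw)
  rw [h1, h2, add_zero] at key
  exact le_antisymm key (le_inf (add_nonneg hu hv) hw)

end Aux



/-- With `S = S⁺ - S⁻`, `T = T⁺ - T⁻` decompositions into lattice
homomorphisms as in the statement, for all positive `x, y` one has
`(b(S⁺x,T⁺y) + b(S⁻x,T⁻y)) ⊓ (b(S⁺x,T⁻y) + b(S⁻x,T⁺y)) = 0`, and consequently
these two expressions are the positive and negative part of `b(Sx,Ty)`. -/
theorem bimorphism_parts_disjoint_and_posNegPart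
    {E F G : Type*}
    [Lattice E] [AddCommGroup E] [Module ℝ E]
    [CovariantClass E E (· + ·) (· ≤ ·)] [PosSMulMono ℝ E]
    [Lattice F] [AddCommGroup F] [Module ℝ F]
    [CovariantClass F F (· + ·) (· ≤ ·)] [PosSMulMono ℝ F]
    [Lattice G] [AddCommGroup G] [Module ℝ G]
    [CovariantClass G G (· + ·) (· ≤ ·)] [PosSMulMono ℝ G]
    -- archimedean hypotheses
    (hE : ∀ x y : E, (∀ n : ℕ, n • x ≤ y) → x ≤ 0)
    (hF : ∀ x y : F, (∀ n : ℕ, n • x ≤ y) → x ≤ 0)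
    (hG : ∀ x y : G, (∀ n : ℕ, n • x ≤ y) → x ≤ 0)
    -- `S` is an order bounded disjointness preserving operator on `E`
    (S : E →ₗ[ℝ] E)
    (hS_ob : ∀ a c : E, ∃ l u : E, ∀ x : E, a ≤ x → x ≤ c → l ≤ S x ∧ S x ≤ u)
    (hS_dp : ∀ x y : E, |x| ⊓ |y| = 0 → |S x| ⊓ |S y| = 0)
    -- `T` is an order bounded disjointness preserving operator on `F`
    (T : F →ₗ[ℝ] F)
    (hT_ob : ∀ a c : F, ∃ l u : F, ∀ y : F, a ≤ y → y ≤ c → l ≤ T y ∧ T y ≤ u)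
    (hT_dp : ∀ x y : F, |x| ⊓ |y| = 0 → |T x| ⊓ |T y| = 0)
    -- lattice homomorphism decomposition of `S`
    (Sp Sm : E →ₗ[ℝ] E)
    (hSp_lat : ∀ x y : E, Sp (x ⊔ y) = Sp x ⊔ Sp y)
    (hSm_lat : ∀ x y : E, Sm (x ⊔ y) = Sm x ⊔ Sm y)
    (hS_decomp : ∀ x : E, S x = Sp x - Sm x)
    (hS_abs : ∀ x : E, 0 ≤ x → Sp x + Sm x = |S x|)
    -- lattice homomorphism decomposition of `T`
    (Tp Tm : F →ₗ[ℝ] F)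
    (hTp_lat : ∀ x y : F, Tp (x ⊔ y) = Tp x ⊔ Tp y)
    (hTm_lat : ∀ x y : F, Tm (x ⊔ y) = Tm x ⊔ Tm y)
    (hT_decomp : ∀ y : F, T y = Tp y - Tm y)
    (hT_abs : ∀ y : F, 0 ≤ y → Tp y + Tm y = |T y|)
    -- `b` is an ℓ-bimorphism
    (b : E →ₗ[ℝ] F →ₗ[ℝ] G)
    (hb_pos : ∀ x : E, 0 ≤ x → ∀ y : F, 0 ≤ y → 0 ≤ b x y)
    (hb_dp₁ : ∀ x y : E, |x| ⊓ |y| = 0 → ∀ z : F, |b x z| ⊓ |b y z| = 0)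
    (hb_dp₂ : ∀ u v : F, |u| ⊓ |v| = 0 → ∀ t : E, |b t u| ⊓ |b t v| = 0) :
    ∀ x : E, 0 ≤ x → ∀ y : F, 0 ≤ y →
      (b (Sp x) (Tp y) + b (Sm x) (Tm y)) ⊓ (b (Sp x) (Tm y) + b (Sm x) (Tp y)) = 0 ∧
      b (Sp x) (Tp y) + b (Sm x) (Tm y) = b (S x) (T y) ⊔ 0 ∧
      b (Sp x) (Tm y) + b (Sm x) (Tp y) = -(b (S x) (T y)) ⊔ 0 := by
  intro x hx y hy
  have hSinf : Sp x ⊓ Sm x = 0 :=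
    aux_inf_zero _ _ (by rw [← hS_decomp x]; exact hS_abs x hx)
  have hTinf : Tp y ⊓ Tm y = 0 :=
    aux_inf_zero _ _ (by rw [← hT_decomp y]; exact hT_abs y hy)
  have hSp0 : 0 ≤ Sp x := by
    have := inf_le_left (a := Sp x) (b := Sm x); rw [hSinf] at this; exact this
  have hSm0 : 0 ≤ Sm x := by
    have := inf_le_right (a := Sp x) (b := Sm x); rw [hSinf] at this; exact this
  have hTp0 : 0 ≤ Tp y := by
    have := inf_le_left (a := Tp y) (b := Tm y); rw [hTinf] at this; exact this
  have hTm0 : 0 ≤ Tm y := by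
    have := inf_le_right (a := Tp y) (b := Tm y); rw [hTinf] at this; exact this
  have hSabs : |Sp x| ⊓ |Sm x| = 0 := by
    rw [abs_of_nonneg hSp0, abs_of_nonneg hSm0]; exact hSinf
  have hTabs : |Tp y| ⊓ |Tm y| = 0 := by
    rw [abs_of_nonneg hTp0, abs_of_nonneg hTm0]; exact hTinf
  set a₁ := b (Sp x) (Tp y) with ha₁def
  set a₂ := b (Sm x) (Tm y) with ha₂def
  set c₁ := b (Sp x) (Tm y) with hc₁def
  set c₂ := b (Sm x) (Tp y) with hc₂def
  have ha₁ : 0 ≤ a₁ := hb_pos _ hSp0 _ hTp0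
  have ha₂ : 0 ≤ a₂ := hb_pos _ hSm0 _ hTm0
  have hc₁ : 0 ≤ c₁ := hb_pos _ hSp0 _ hTm0
  have hc₂ : 0 ≤ c₂ := hb_pos _ hSm0 _ hTp0
  have d11 : a₁ ⊓ c₁ = 0 := by
    have := hb_dp₂ (Tp y) (Tm y) hTabs (Sp x)
    rwa [abs_of_nonneg ha₁, abs_of_nonneg hc₁] at this
  have d12 : a₁ ⊓ c₂ = 0 := by
    have := hb_dp₁ (Sp x) (Sm x) hSabs (Tp y)
    rwa [abs_of_nonneg ha₁, abs_of_nonneg hc₂] at this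
  have d21 : a₂ ⊓ c₁ = 0 := by
    have := hb_dp₁ (Sp x) (Sm x) hSabs (Tm y)
    rwa [abs_of_nonneg hc₁, abs_of_nonneg ha₂, inf_comm] at this
  have d22 : a₂ ⊓ c₂ = 0 := by
    have := hb_dp₂ (Tp y) (Tm y) hTabs (Sm x)
    rwa [abs_of_nonneg hc₂, abs_of_nonneg ha₂, inf_comm] at this
  have h1 : a₁ ⊓ (c₁ + c₂) = 0 := by
    rw [inf_comm]
    exact aux_add_inf_zero hc₁ hc₂ ha₁ (by rw [inf_comm]; exact d11) (by rw [inf_comm]; exact d12)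
  have h2 : a₂ ⊓ (c₁ + c₂) = 0 := by
    rw [inf_comm]
    exact aux_add_inf_zero hc₁ hc₂ ha₂ (by rw [inf_comm]; exact d21) (by rw [inf_comm]; exact d22)
  have hmain : (a₁ + a₂) ⊓ (c₁ + c₂) = 0 :=
    aux_add_inf_zero ha₁ ha₂ (add_nonneg hc₁ hc₂) h1 h2
  have hz : b (S x) (T y) = (a₁ + a₂) - (c₁ + c₂) := by
    rw [hS_decomp, hT_decomp]
    simp only [map_sub, LinearMap.sub_apply]
    abel
  have hsup : (a₁ + a₂) ⊔ (c₁ + c₂) = (a₁ + a₂) + (c₁ + c₂) := by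
    have := inf_add_sup (a₁ + a₂) (c₁ + c₂)
    rwa [hmain, zero_add] at this
  refine ⟨hmain, ?_, ?_⟩
  · symm
    calc b (S x) (T y) ⊔ 0
        = ((a₁ + a₂) - (c₁ + c₂)) ⊔ ((c₁ + c₂) - (c₁ + c₂)) := by rw [hz, sub_self]
      _ = ((a₁ + a₂) ⊔ (c₁ + c₂)) - (c₁ + c₂) := by rw [sup_sub]
      _ = a₁ + a₂ := by rw [hsup]; abel
  · have hsup' : (c₁ + c₂) ⊔ (a₁ + a₂) = (c₁ + c₂) + (a₁ + a₂) := by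
      rw [sup_comm, hsup]; abel
    symm
    calc -(b (S x) (T y)) ⊔ 0
        = ((c₁ + c₂) - (a₁ + a₂)) ⊔ ((a₁ + a₂) - (a₁ + a₂)) := by
          rw [hz, sub_self, neg_sub]
      _ = ((c₁ + c₂) ⊔ (a₁ + a₂)) - (a₁ + a₂) := by rw [sup_sub]
      _ = c₁ + c₂ := by rw [hsup']; abel
end

section
/- Let $E$, $F$ and $G$ be archimedean Riesz spaces, let $b : E \times F \to G$ be an $\ell$-bimorphism, let $S : E \to E$ be an order bounded disjointness preserving linear operator admitting lattice homomorphisms $S^{+}, S^{-} : E \to E$ with $S = S^{+} - S^{-}$ and $(S^{+} + S^{-})(x) = |S x|$ for all $x \in E^{+}$, and let $T : F \to F$ be an order bounded disjointness preserving linear operator admitting lattice homomorphisms $T^{+}, T^{-} : F \to F$ with $T = T^{+} - T^{-}$ and $(T^{+} + T^{-})(y) = |T y|$ for all $y \in F^{+}$. Then for every fixed $y \in F$, the linear operator $x \mapsto b(S^{+}(x), T^{+}(y)) + b(S^{-}(x), T^{-}(y))$ from $E$ to $G$ is order bounded and disjointness preserving. -/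
section Aux

variable {α : Type*} [Lattice α] [AddCommGroup α]
  [CovariantClass α α (· + ·) (· ≤ ·)]

private lemma aux_disj_add {a b c : α} (ha : 0 ≤ a) (hb : 0 ≤ b) (hc : 0 ≤ c)
    (hab : a ⊓ b = 0) (hac : a ⊓ c = 0) : a ⊓ (b + c) = 0 := by
  have h1 : a ⊓ (b + c) ≤ c := by
    calc a ⊓ (b + c) ≤ (a + c) ⊓ (b + c) :=
          inf_le_inf_right _ (le_add_of_nonneg_right hc)
      _ = a ⊓ b + c := (inf_add a b c).symm
      _ = c := by rw [hab, zero_add]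
  have h2 : a ⊓ (b + c) ≤ a ⊓ c := le_inf inf_le_left h1
  exact le_antisymm (h2.trans hac.le) (le_inf ha (add_nonneg hb hc))

variable {β : Type*} [Lattice β] [AddCommGroup β] [Module ℝ β]
  [CovariantClass β β (· + ·) (· ≤ ·)] [Module ℝ α]

private lemma aux_mono (f : α →ₗ[ℝ] β) (hf : ∀ x y, f (x ⊔ y) = f x ⊔ f y)
    {x y : α} (h : x ≤ y) : f x ≤ f y := by
  have h1 := hf x y
  rw [sup_eq_right.mpr h] at h1
  exact sup_eq_right.mp h1.symm

private lemma aux_abs (f : α →ₗ[ℝ] β) (hf : ∀ x y, f (x ⊔ y) = f x ⊔ f y)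
    (x : α) : f |x| = |f x| := by
  have h1 : |x| = x ⊔ -x := rfl
  have h2 : |f x| = f x ⊔ -(f x) := rfl
  rw [h1, hf, map_neg, h2]

private lemma aux_inf_map (f : α →ₗ[ℝ] β) (hf : ∀ x y, f (x ⊔ y) = f x ⊔ f y)
    (x y : α) : f (x ⊓ y) = f x ⊓ f y := by
  have h1 : x ⊓ y = -(-x ⊔ -y) := by rw [neg_sup, neg_neg, neg_neg]
  rw [h1, map_neg, hf, map_neg, map_neg, neg_sup, neg_neg, neg_neg]

private lemma aux_abs_add (a b : α) : |a + b| ≤ |a| + |b| := by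
  refine sup_le (add_le_add (le_abs_self a) (le_abs_self b)) ?_
  rw [neg_add]
  exact add_le_add (neg_le_abs a) (neg_le_abs b)

end Aux

set_option maxHeartbeats 1000000 in
/-- With `b` an ℓ-bimorphism and `S`, `T` order bounded
disjointness preserving operators with lattice homomorphism decompositions
`S = S⁺ - S⁻` and `T = T⁺ - T⁻`, for each fixed `y ∈ F` the operator
`x ↦ b(S⁺x, T⁺y) + b(S⁻x, T⁻y)` from `E` to `G` is order bounded and
disjointness preserving. -/
theorem partial_operator_orderBounded_disjointnessPreserving
    {E F G : Type*}
    [Lattice E] [AddCommGroup E] [Module ℝ E]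
    [CovariantClass E E (· + ·) (· ≤ ·)] [PosSMulMono ℝ E]
    [Lattice F] [AddCommGroup F] [Module ℝ F]
    [CovariantClass F F (· + ·) (· ≤ ·)] [PosSMulMono ℝ F]
    [Lattice G] [AddCommGroup G] [Module ℝ G]
    [CovariantClass G G (· + ·) (· ≤ ·)] [PosSMulMono ℝ G]
    -- archimedean hypotheses
    (hE : ∀ x y : E, (∀ n : ℕ, n • x ≤ y) → x ≤ 0)
    (hF : ∀ x y : F, (∀ n : ℕ, n • x ≤ y) → x ≤ 0)
    (hG : ∀ x y : G, (∀ n : ℕ, n • x ≤ y) → x ≤ 0)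
    -- `b` is an ℓ-bimorphism
    (b : E →ₗ[ℝ] F →ₗ[ℝ] G)
    (hb_pos : ∀ x : E, 0 ≤ x → ∀ y : F, 0 ≤ y → 0 ≤ b x y)
    (hb_dp₁ : ∀ x y : E, |x| ⊓ |y| = 0 → ∀ z : F, |b x z| ⊓ |b y z| = 0)
    (hb_dp₂ : ∀ u v : F, |u| ⊓ |v| = 0 → ∀ t : E, |b t u| ⊓ |b t v| = 0)
    -- `S` is an order bounded disjointness preserving operator on `E`
    (S : E →ₗ[ℝ] E)
    (hS_ob : ∀ a c : E, ∃ l u : E, ∀ x : E, a ≤ x → x ≤ c → l ≤ S x ∧ S x ≤ u)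
    (hS_dp : ∀ x y : E, |x| ⊓ |y| = 0 → |S x| ⊓ |S y| = 0)
    -- lattice homomorphism decomposition of `S`
    (Sp Sm : E →ₗ[ℝ] E)
    (hSp_lat : ∀ x y : E, Sp (x ⊔ y) = Sp x ⊔ Sp y)
    (hSm_lat : ∀ x y : E, Sm (x ⊔ y) = Sm x ⊔ Sm y)
    (hS_decomp : ∀ x : E, S x = Sp x - Sm x)
    (hS_abs : ∀ x : E, 0 ≤ x → Sp x + Sm x = |S x|)
    -- `T` is an order bounded disjointness preserving operator on `F`
    (T : F →ₗ[ℝ] F)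
    (hT_ob : ∀ a c : F, ∃ l u : F, ∀ y : F, a ≤ y → y ≤ c → l ≤ T y ∧ T y ≤ u)
    (hT_dp : ∀ x y : F, |x| ⊓ |y| = 0 → |T x| ⊓ |T y| = 0)
    -- lattice homomorphism decomposition of `T`
    (Tp Tm : F →ₗ[ℝ] F)
    (hTp_lat : ∀ x y : F, Tp (x ⊔ y) = Tp x ⊔ Tp y)
    (hTm_lat : ∀ x y : F, Tm (x ⊔ y) = Tm x ⊔ Tm y)
    (hT_decomp : ∀ y : F, T y = Tp y - Tm y)
    (hT_abs : ∀ y : F, 0 ≤ y → Tp y + Tm y = |T y|) :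
    ∀ y : F,
      -- the operator `x ↦ b(S⁺x, T⁺y) + b(S⁻x, T⁻y)` is order bounded
      (∀ a c : E, ∃ l u : G, ∀ x : E, a ≤ x → x ≤ c →
        l ≤ b (Sp x) (Tp y) + b (Sm x) (Tm y) ∧
          b (Sp x) (Tp y) + b (Sm x) (Tm y) ≤ u) ∧
      -- and disjointness preserving
      (∀ x₁ x₂ : E, |x₁| ⊓ |x₂| = 0 →
        |b (Sp x₁) (Tp y) + b (Sm x₁) (Tm y)| ⊓
          |b (Sp x₂) (Tp y) + b (Sm x₂) (Tm y)| = 0) := by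
  intro y
  -- monotonicity of b in the first argument (for nonneg second argument)
  have hb1 : ∀ u u' : E, u ≤ u' → ∀ w : F, 0 ≤ w → b u w ≤ b u' w := by
    intro u u' h w hw
    have h0 := hb_pos (u' - u) (sub_nonneg.mpr h) w hw
    rw [map_sub, LinearMap.sub_apply] at h0
    exact sub_nonneg.mp h0
  -- monotonicity of b in the second argument (for nonneg first argument)
  have hb2 : ∀ u : E, 0 ≤ u → ∀ w w' : F, w ≤ w' → b u w ≤ b u w' := by
    intro u hu w w' h
    have h0 := hb_pos u hu (w' - w) (sub_nonneg.mpr h)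
    rw [map_sub] at h0
    exact sub_nonneg.mp h0
  -- |b u z| ≤ b u |z| for nonneg u
  have habs : ∀ u : E, 0 ≤ u → ∀ z : F, |b u z| ≤ b u |z| := by
    intro u hu z
    have h1 : b u z ≤ b u |z| := hb2 u hu z |z| (le_abs_self z)
    have h2 : -(b u z) ≤ b u |z| := by
      have h3 : -|z| ≤ z := neg_le.mp (neg_le_abs z)
      have h4 := hb2 u hu (-z) |z| (neg_le.mpr h3)
      rw [map_neg] at h4
      exact h4
    exact abs_le'.mpr ⟨h1, h2⟩
  constructor
  · -- order boundedness
    intro a c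
    set p := (Tp y)⁺ with hp
    set m := (Tp y)⁻ with hm
    set q := (Tm y)⁺ with hq
    set r := (Tm y)⁻ with hr
    refine ⟨(b (Sp a) p - b (Sp c) m) + (b (Sm a) q - b (Sm c) r),
           (b (Sp c) p - b (Sp a) m) + (b (Sm c) q - b (Sm a) r), ?_⟩
    intro x hax hxc
    have hSpa : Sp a ≤ Sp x := aux_mono Sp hSp_lat hax
    have hSpc : Sp x ≤ Sp c := aux_mono Sp hSp_lat hxc
    have hSma : Sm a ≤ Sm x := aux_mono Sm hSm_lat hax
    have hSmc : Sm x ≤ Sm c := aux_mono Sm hSm_lat hxc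
    have hTpy : b (Sp x) (Tp y) = b (Sp x) p - b (Sp x) m := by
      rw [← map_sub]
      congr 1
      exact (posPart_sub_negPart (Tp y)).symm
    have hTmy : b (Sm x) (Tm y) = b (Sm x) q - b (Sm x) r := by
      rw [← map_sub]
      congr 1
      exact (posPart_sub_negPart (Tm y)).symm
    rw [hTpy, hTmy]
    constructor
    · exact add_le_add
        (sub_le_sub (hb1 _ _ hSpa p (posPart_nonneg _)) (hb1 _ _ hSpc m (negPart_nonneg _)))
        (sub_le_sub (hb1 _ _ hSma q (posPart_nonneg _)) (hb1 _ _ hSmc r (negPart_nonneg _)))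
    · exact add_le_add
        (sub_le_sub (hb1 _ _ hSpc p (posPart_nonneg _)) (hb1 _ _ hSpa m (negPart_nonneg _)))
        (sub_le_sub (hb1 _ _ hSmc q (posPart_nonneg _)) (hb1 _ _ hSma r (negPart_nonneg _)))
  · -- disjointness preservation
    intro x₁ x₂ hx
    have hSp_pos : ∀ x : E, 0 ≤ x → 0 ≤ Sp x := fun x hx0 => by
      have := aux_mono Sp hSp_lat hx0; rwa [map_zero] at this
    have hSm_pos : ∀ x : E, 0 ≤ x → 0 ≤ Sm x := fun x hx0 => by
      have := aux_mono Sm hSm_lat hx0; rwa [map_zero] at this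
    have hSdisj : |S (|x₁|)| ⊓ |S (|x₂|)| = 0 := by
      apply hS_dp; rwa [abs_abs, abs_abs]
    have hkey : ∀ (P : E →ₗ[ℝ] E), (∀ u v, P (u ⊔ v) = P u ⊔ P v) →
        (∀ x : E, 0 ≤ x → 0 ≤ P x) →
        (∀ x : E, 0 ≤ x → P x ≤ |S x|) →
        ∀ x : E, |P x| ≤ |S (|x|)| := by
      intro P hPlat hPpos hPle x
      calc |P x| = P |x| := (aux_abs P hPlat x).symm
        _ ≤ |S (|x|)| := hPle _ (abs_nonneg x)
    have hSple : ∀ x : E, 0 ≤ x → Sp x ≤ |S x| := by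
      intro x hx0
      have h1 := hS_abs x hx0
      have h2 : Sp x ≤ Sp x + Sm x := le_add_of_nonneg_right (hSm_pos x hx0)
      rwa [h1] at h2
    have hSmle : ∀ x : E, 0 ≤ x → Sm x ≤ |S x| := by
      intro x hx0
      have h1 := hS_abs x hx0
      have h2 : Sm x ≤ Sp x + Sm x := le_add_of_nonneg_left (hSp_pos x hx0)
      rwa [h1] at h2
    have hbSp1 := hkey Sp hSp_lat hSp_pos hSple x₁
    have hbSm1 := hkey Sm hSm_lat hSm_pos hSmle x₁
    have hbSp2 := hkey Sp hSp_lat hSp_pos hSple x₂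
    have hbSm2 := hkey Sm hSm_lat hSm_pos hSmle x₂
    have hE4 : ∀ u v : E, |u| ≤ |S (|x₁|)| → |v| ≤ |S (|x₂|)| → |u| ⊓ |v| = 0 := by
      intro u v h1 h2
      exact le_antisymm ((inf_le_inf h1 h2).trans hSdisj.le)
        (le_inf (abs_nonneg u) (abs_nonneg v))
    -- |b u z| ≤ b |u| |z|
    have habs2 : ∀ (u : E) (z : F), |b u z| ≤ b |u| |z| := by
      intro u z
      have h1 : b u z = b u⁺ z - b u⁻ z := by
        rw [← LinearMap.sub_apply, ← map_sub, posPart_sub_negPart]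
      rw [h1, sub_eq_add_neg]
      calc |b u⁺ z + -(b u⁻ z)| ≤ |b u⁺ z| + |-(b u⁻ z)| := aux_abs_add _ _
        _ = |b u⁺ z| + |b u⁻ z| := by rw [abs_neg]
        _ ≤ b u⁺ |z| + b u⁻ |z| :=
            add_le_add (habs _ (posPart_nonneg u) z) (habs _ (negPart_nonneg u) z)
        _ = b |u| |z| := by
            rw [← LinearMap.add_apply, ← map_add, posPart_add_negPart]
    -- if u ⊥ v in E then b u z ⊥ b v z' for all z, z'
    have hbdisj : ∀ u v : E, |u| ⊓ |v| = 0 → ∀ z z' : F,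
        |b u z| ⊓ |b v z'| = 0 := by
      intro u v huv z z'
      set w := |z| ⊔ |z'| with hw
      have h1 : |b u z| ≤ b |u| w :=
        (habs2 u z).trans (hb2 |u| (abs_nonneg u) _ _ le_sup_left)
      have h2 : |b v z'| ≤ b |v| w :=
        (habs2 v z').trans (hb2 |v| (abs_nonneg v) _ _ le_sup_right)
      have hw0 : 0 ≤ w := (abs_nonneg z).trans le_sup_left
      have h0 := hb_dp₁ |u| |v| (by rwa [abs_abs, abs_abs]) w
      rw [abs_of_nonneg (hb_pos _ (abs_nonneg u) w hw0),
          abs_of_nonneg (hb_pos _ (abs_nonneg v) w hw0)] at h0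
      exact le_antisymm ((inf_le_inf h1 h2).trans h0.le)
        (le_inf (abs_nonneg _) (abs_nonneg _))
    -- the four cross disjointness facts
    have dAA := hbdisj (Sp x₁) (Sp x₂) (hE4 _ _ hbSp1 hbSp2) (Tp y) (Tp y)
    have dAB := hbdisj (Sp x₁) (Sm x₂) (hE4 _ _ hbSp1 hbSm2) (Tp y) (Tm y)
    have dBA := hbdisj (Sm x₁) (Sp x₂) (hE4 _ _ hbSm1 hbSp2) (Tm y) (Tp y)
    have dBB := hbdisj (Sm x₁) (Sm x₂) (hE4 _ _ hbSm1 hbSm2) (Tm y) (Tm y)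
    set A₁ := b (Sp x₁) (Tp y)
    set B₁ := b (Sm x₁) (Tm y)
    set A₂ := b (Sp x₂) (Tp y)
    set B₂ := b (Sm x₂) (Tm y)
    have h1 : |A₁| ⊓ (|A₂| + |B₂|) = 0 :=
      aux_disj_add (abs_nonneg _) (abs_nonneg _) (abs_nonneg _) dAA dAB
    have h2 : |B₁| ⊓ (|A₂| + |B₂|) = 0 :=
      aux_disj_add (abs_nonneg _) (abs_nonneg _) (abs_nonneg _) dBA dBB
    have h3 : (|A₂| + |B₂|) ⊓ (|A₁| + |B₁|) = 0 :=
      aux_disj_add (add_nonneg (abs_nonneg _) (abs_nonneg _)) (abs_nonneg _)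
        (abs_nonneg _) (by rw [inf_comm]; exact h1) (by rw [inf_comm]; exact h2)
    have h4 : (|A₁| + |B₁|) ⊓ (|A₂| + |B₂|) = 0 := by rw [inf_comm]; exact h3
    exact le_antisymm
      ((inf_le_inf (aux_abs_add A₁ B₁) (aux_abs_add A₂ B₂)).trans h4.le)
      (le_inf (abs_nonneg _) (abs_nonneg _))
end
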